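/- arXiv:2204.07245 — 6 statements merged into one kernel-verified Lean document; each statement's English description precedes it below -/
import Mathlib

section
/- The function φ(t) = (1 − e^{−t})·t / (e^{−t} − 1 + t) is strictly decreasing on (0, +∞), with lim_{t→0+} φ(t) = 2 and lim_{t→+∞} φ(t) = 1. Consequently, for every t > 0 one has the strict inequalities e^{−t} − 1 + t < (1 − e^{−t})·t < 2·(e^{−t} − 1 + t). -/
/-!
The derivative of `φ = N / D`, with `N t = (1 - e^{-t}) t` and `D t = e^{-t} - 1 + t`, has
numerator `N' D - N D' = t² e^{-t} - (1 - e^{-t})² = e^{-t} (t² - (2 sinh (t/2))²)`, which is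
negative because `t < 2 sinh (t/2)`. At `0+` two applications of L'Hôpital's rule reduce `φ` to
`(2 - t) e^{-t} / e^{-t}`; at `+∞`, `φ t = (1 - e^{-t}) / (D t / t) → 1`. A strictly decreasing
function squeezed between these limits satisfies `1 < φ t < 2`, which is the pair of inequalities.
-/

open Real Filter Set Topology

section StrictAntiOn

variable {α β : Type*} [LinearOrder α] [NoMaxOrder α] [LinearOrder β] [TopologicalSpace β]
  [OrderClosedTopology β] {f : α → β} {a x : α} {L : β}

theorem StrictAntiOn.lt_of_tendsto_nhdsGT [TopologicalSpace α] [OrderTopology α]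
    [DenselyOrdered α] (hf : StrictAntiOn f (Ioi a))
    (hL : Tendsto f (𝓝[>] a) (𝓝 L)) (hx : a < x) : f x < L := by
  obtain ⟨m, ham, hmx⟩ := exists_between hx
  have hm_le : f m ≤ L := ge_of_tendsto hL <| by
    filter_upwards [Ioo_mem_nhdsGT ham] with c hc
    exact (hf hc.1 ham hc.2).le
  exact (hf ham (ham.trans hmx) hmx).trans_le hm_le

theorem StrictAntiOn.lt_of_tendsto_atTop (hf : StrictAntiOn f (Ioi a))
    (hL : Tendsto f atTop (𝓝 L)) (hx : a < x) : L < f x := by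
  have : Nonempty α := ⟨x⟩
  obtain ⟨m, hxm⟩ := exists_gt x
  have hm_ge : L ≤ f m := le_of_tendsto hL <| by
    filter_upwards [eventually_gt_atTop m] with c hc
    exact (hf (hx.trans hxm) (hx.trans (hxm.trans hc)) hc).le
  exact hm_ge.trans_lt (hf hx (hx.trans hxm) hxm)

end StrictAntiOn

theorem exp_neg_sub_one_add_pos {t : ℝ} (ht : 0 < t) : 0 < exp (-t) - 1 + t := by
  linarith [add_one_lt_exp (neg_ne_zero.2 ht.ne')]

theorem sq_mul_exp_neg_lt_sq_one_sub_exp_neg {t : ℝ} (ht : 0 < t) :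
    t ^ 2 * exp (-t) < (1 - exp (-t)) ^ 2 := by
  have hsinh : t < 2 * sinh (t / 2) := by linarith [self_lt_sinh_iff.2 (half_pos ht)]
  have hsq : (1 - exp (-t)) ^ 2 = (2 * sinh (t / 2)) ^ 2 * exp (-t) := by
    have h1 : exp t = exp (t / 2) ^ 2 := by rw [← exp_nat_mul]; ring_nf
    have h2 : exp (-(t / 2)) = (exp (t / 2))⁻¹ := exp_neg _
    rw [sinh_eq, exp_neg t, h1, h2]
    field_simp
  rw [hsq]
  gcongr

theorem hasDerivAt_exp_neg (x : ℝ) : HasDerivAt (fun t => exp (-t)) (-exp (-x)) x := by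
  simpa using (hasDerivAt_neg' x).exp

theorem hasDerivAt_one_sub_exp_neg_mul_self (x : ℝ) :
    HasDerivAt (fun t => (1 - exp (-t)) * t) (x * exp (-x) + 1 - exp (-x)) x :=
  (((hasDerivAt_exp_neg x).const_sub 1).mul (hasDerivAt_id' x)).congr_deriv (by ring)

theorem hasDerivAt_exp_neg_sub_one_add_self (x : ℝ) :
    HasDerivAt (fun t => exp (-t) - 1 + t) (1 - exp (-x)) x :=
  (((hasDerivAt_exp_neg x).sub_const 1).add (hasDerivAt_id' x)).congr_deriv (by ring)

theorem hasDerivAt_self_mul_exp_neg_add_one_sub_exp_neg (x : ℝ) :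
    HasDerivAt (fun t => t * exp (-t) + 1 - exp (-t)) ((2 - x) * exp (-x)) x :=
  ((((hasDerivAt_id' x).mul (hasDerivAt_exp_neg x)).add_const 1).sub
    (hasDerivAt_exp_neg x)).congr_deriv (by ring)

theorem hasDerivAt_one_sub_exp_neg (x : ℝ) :
    HasDerivAt (fun t => 1 - exp (-t)) (exp (-x)) x := by
  simpa using (hasDerivAt_exp_neg x).const_sub 1

noncomputable def phi (t : ℝ) : ℝ := ((1 - exp (-t)) * t) / (exp (-t) - 1 + t)

theorem hasDerivAt_phi {x : ℝ} (hx : 0 < x) :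
    HasDerivAt phi ((x ^ 2 * exp (-x) - (1 - exp (-x)) ^ 2) / (exp (-x) - 1 + x) ^ 2) x := by
  have h := (hasDerivAt_one_sub_exp_neg_mul_self x).div (hasDerivAt_exp_neg_sub_one_add_self x)
    (exp_neg_sub_one_add_pos hx).ne'
  exact h.congr_deriv (by ring)

theorem phi_strictAntiOn : StrictAntiOn phi (Ioi 0) := by
  refine strictAntiOn_of_deriv_neg (convex_Ioi 0)
    (fun x hx => (hasDerivAt_phi hx).continuousAt.continuousWithinAt) fun x hx => ?_
  rw [interior_Ioi] at hx
  rw [(hasDerivAt_phi hx).deriv]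
  exact div_neg_of_neg_of_pos (sub_neg.2 (sq_mul_exp_neg_lt_sq_one_sub_exp_neg hx))
    (pow_pos (exp_neg_sub_one_add_pos hx) 2)

theorem tendsto_phi_nhdsGT_zero : Tendsto phi (𝓝[>] 0) (𝓝 2) := by
  have hratio : Tendsto (fun x => (x * exp (-x) + 1 - exp (-x)) / (1 - exp (-x)))
      (𝓝[>] 0) (𝓝 2) := by
    refine HasDerivAt.lhopital_zero_nhdsGT
      (.of_forall hasDerivAt_self_mul_exp_neg_add_one_sub_exp_neg)
      (.of_forall hasDerivAt_one_sub_exp_neg) (.of_forall fun x => (exp_pos _).ne')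
      (((by fun_prop : Continuous _).tendsto' 0 0 (by simp)).mono_left nhdsWithin_le_nhds)
      (((by fun_prop : Continuous _).tendsto' 0 0 (by simp)).mono_left nhdsWithin_le_nhds) ?_
    have hlin : Tendsto (fun x : ℝ => 2 - x) (𝓝[>] 0) (𝓝 2) :=
      ((by fun_prop : Continuous _).tendsto' 0 2 (by simp)).mono_left nhdsWithin_le_nhds
    exact hlin.congr fun x => (mul_div_cancel_right₀ _ (exp_pos _).ne').symm
  refine HasDerivAt.lhopital_zero_nhdsGT (.of_forall hasDerivAt_one_sub_exp_neg_mul_self)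
    (.of_forall hasDerivAt_exp_neg_sub_one_add_self) ?_
    (((by fun_prop : Continuous _).tendsto' 0 0 (by simp)).mono_left nhdsWithin_le_nhds)
    (((by fun_prop : Continuous _).tendsto' 0 0 (by simp)).mono_left nhdsWithin_le_nhds) hratio
  filter_upwards [self_mem_nhdsWithin] with x (hx : 0 < x)
  exact sub_ne_zero.2 (exp_lt_one_iff.2 (neg_neg_of_pos hx)).ne'

theorem tendsto_phi_atTop : Tendsto phi atTop (𝓝 1) := by
  have hnum : Tendsto (fun t => 1 - exp (-t)) atTop (𝓝 1) := by
    simpa using tendsto_exp_neg_atTop_nhds_zero.const_sub 1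
  have hden : Tendsto (fun t => (exp (-t) - 1 + t) / t) atTop (𝓝 1) := by
    have h : Tendsto (fun t => (exp (-t) - 1) * t⁻¹ + 1) atTop (𝓝 1) := by
      simpa using ((tendsto_exp_neg_atTop_nhds_zero.sub_const 1).mul
        tendsto_inv_atTop_zero).add_const 1
    refine h.congr' ?_
    filter_upwards [eventually_ne_atTop 0] with t ht
    field_simp
  refine (div_one (1 : ℝ) ▸ hnum.div hden one_ne_zero).congr fun t => ?_
  rw [Pi.div_apply, phi, div_div_eq_mul_div]

/-- The function `φ(t) = (1 − e^{−t})·t / (e^{−t} − 1 + t)` is strictly decreasing on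
`(0, +∞)`, tends to `2` at `0+` and to `1` at `+∞`; consequently, for every `t > 0`,
`e^{−t} − 1 + t < (1 − e^{−t})·t < 2·(e^{−t} − 1 + t)`. -/
theorem stmt0 :
    StrictAntiOn (fun t : ℝ => ((1 - Real.exp (-t)) * t) / (Real.exp (-t) - 1 + t))
      (Set.Ioi 0) ∧
    Filter.Tendsto (fun t : ℝ => ((1 - Real.exp (-t)) * t) / (Real.exp (-t) - 1 + t))
      (nhdsWithin 0 (Set.Ioi 0)) (nhds 2) ∧
    Filter.Tendsto (fun t : ℝ => ((1 - Real.exp (-t)) * t) / (Real.exp (-t) - 1 + t))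
      Filter.atTop (nhds 1) ∧
    ∀ t : ℝ, 0 < t →
      Real.exp (-t) - 1 + t < (1 - Real.exp (-t)) * t ∧
      (1 - Real.exp (-t)) * t < 2 * (Real.exp (-t) - 1 + t) := by
  refine ⟨phi_strictAntiOn, tendsto_phi_nhdsGT_zero, tendsto_phi_atTop, fun t ht => ?_⟩
  have hD := exp_neg_sub_one_add_pos ht
  have hlower := phi_strictAntiOn.lt_of_tendsto_atTop tendsto_phi_atTop ht
  have hupper := phi_strictAntiOn.lt_of_tendsto_nhdsGT tendsto_phi_nhdsGT_zero ht
  rw [phi, lt_div_iff₀ hD, one_mul] at hlower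
  rw [phi, div_lt_iff₀ hD] at hupper
  exact ⟨hlower, hupper⟩
end

section
/- Let ρ be a Borel measure on (0, +∞) with 0 < ∫₀^∞ (v² ∧ v) ρ(dv) < +∞, and let J_ρ(b) = ∫₀^∞ (e^{−bv} − 1 + bv) ρ(dv) for b ≥ 0. Then the function b ↦ J_ρ(b)/b is strictly increasing on (0, +∞) and lim_{b→0+} J_ρ(b)/b = 0; the function b ↦ J_ρ(b)/b² is strictly decreasing on (0, +∞) and lim_{b→+∞} J_ρ(b)/b² = 0. In particular, for any b₀ > 0 and any b ∈ (0, b₀), one has (J_ρ(b₀)/b₀²)·b² < J_ρ(b) < (J_ρ(b₀)/b₀)·b. -/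
/-!
Write `ψ(x) = e^{-x} - 1 + x`. Then `J(b)/b = ∫ v · ψ(bv)/(bv) dρ` and
`J(b)/b² = ∫ v² · ψ(bv)/(bv)² dρ`, so both monotonicity claims reduce to one-variable facts:
`ψ(x)/x` increases because `ψ` is strictly convex with `ψ(0) = 0`, and `ψ(x)/x²` decreases because
`x (1 - e^{-x}) < 2 ψ(x)`. Strictness survives integration since `ρ` does not vanish on `(0, ∞)`.
The limits follow by dominated convergence from `ψ(x) ≤ min(x², x)`, which gives
`ψ(bv) ≤ max(b², b) · min(v², v)`: the dominating function `min(v², v)` works for `b ≤ 1` in the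
first limit and for `b ≥ 1` in the second.
-/

open Real Filter Set MeasureTheory Topology

noncomputable def compensatedExp (x : ℝ) : ℝ := exp (-x) - 1 + x

@[fun_prop]
lemma continuous_compensatedExp : Continuous compensatedExp := by
  unfold compensatedExp; fun_prop

lemma hasDerivAt_compensatedExp (x : ℝ) : HasDerivAt compensatedExp (1 - exp (-x)) x :=
  ((((hasDerivAt_neg x).exp).sub_const 1).add (hasDerivAt_id x)).congr_deriv (by ring)

lemma compensatedExp_zero : compensatedExp 0 = 0 := by simp [compensatedExp]

lemma compensatedExp_nonneg (x : ℝ) : 0 ≤ compensatedExp x := by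
  have := add_one_le_exp (-x)
  unfold compensatedExp; linarith

lemma compensatedExp_le_min_sq_self {x : ℝ} (hx : 0 ≤ x) : compensatedExp x ≤ min (x ^ 2) x := by
  have hle_self : compensatedExp x ≤ x := by
    have := exp_le_one_iff.mpr (neg_nonpos.mpr hx)
    unfold compensatedExp; linarith
  rcases le_total x 1 with hx1 | hx1
  · refine le_min ?_ hle_self
    have := abs_exp_sub_one_sub_id_le (x := -x) (by rwa [abs_neg, abs_of_nonneg hx])
    rw [neg_sq, sub_neg_eq_add] at this
    exact (le_abs_self _).trans this
  · rwa [min_eq_right (by nlinarith)]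

lemma compensatedExp_mul_le {b v : ℝ} (hb : 0 ≤ b) (hv : 0 ≤ v) :
    compensatedExp (b * v) ≤ max (b ^ 2) b * min (v ^ 2) v :=
  calc compensatedExp (b * v) ≤ min ((b * v) ^ 2) (b * v) :=
        compensatedExp_le_min_sq_self (mul_nonneg hb hv)
    _ ≤ min (max (b ^ 2) b * v ^ 2) (max (b ^ 2) b * v) := by
        rw [mul_pow]
        exact min_le_min (by gcongr; exact le_max_left _ _) (by gcongr; exact le_max_right _ _)
    _ = max (b ^ 2) b * min (v ^ 2) v := (mul_min_of_nonneg _ _ (hb.trans (le_max_right _ _))).symm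

lemma strictConvexOn_exp_neg : StrictConvexOn ℝ univ fun x => exp (-x) := by
  refine ⟨convex_univ, fun x _ y _ hxy a b ha hb hab => ?_⟩
  convert strictConvexOn_exp.2 (mem_univ (-x)) (mem_univ (-y)) (neg_injective.ne hxy) ha hb hab
    using 2
  simp only [smul_eq_mul, mul_neg, neg_add]

lemma strictConvexOn_compensatedExp : StrictConvexOn ℝ univ compensatedExp := by
  have hsplit : compensatedExp = (fun x => exp (-x)) + (id + fun _ => -1) := by
    ext x; simp only [compensatedExp, Pi.add_apply, id]; ring
  rw [hsplit]
  exact strictConvexOn_exp_neg.add_convexOn ((convexOn_id convex_univ).add_const (-1))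

lemma strictMonoOn_compensatedExp_div : StrictMonoOn (fun x => compensatedExp x / x) (Ioi 0) :=
  fun x hx y hy hxy => by
    simpa [compensatedExp_zero] using strictConvexOn_compensatedExp.secant_strict_mono
      (mem_univ 0) (mem_univ x) (mem_univ y) hx.ne' hy.ne' hxy

lemma one_add_mul_exp_neg_lt_one {x : ℝ} (hx : 0 < x) : (1 + x) * exp (-x) < 1 :=
  calc (1 + x) * exp (-x) < exp x * exp (-x) := by
        gcongr; linarith [add_one_lt_exp hx.ne']
    _ = 1 := by rw [← exp_add, add_neg_cancel, exp_zero]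

lemma mul_one_sub_exp_neg_lt_two_mul_compensatedExp {x : ℝ} (hx : 0 < x) :
    x * (1 - exp (-x)) < 2 * compensatedExp x := by
  let g x := 2 * compensatedExp x - x * (1 - exp (-x))
  have hg' (t : ℝ) : HasDerivAt g (1 - (1 + t) * exp (-t)) t :=
    (((hasDerivAt_compensatedExp t).const_mul 2).sub
      ((hasDerivAt_id t).mul (((hasDerivAt_neg t).exp).const_sub 1))).congr_deriv
      (by simp only [id_eq]; ring)
  have hg : StrictMonoOn g (Ici 0) :=
    strictMonoOn_of_deriv_pos (convex_Ici 0) (fun t _ => (hg' t).continuousAt.continuousWithinAt)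
      fun t ht => by
        rw [(hg' t).deriv, sub_pos]
        exact one_add_mul_exp_neg_lt_one (by simpa using ht)
  simpa [g, compensatedExp_zero] using hg self_mem_Ici hx.le hx

lemma strictAntiOn_compensatedExp_div_sq :
    StrictAntiOn (fun x => compensatedExp x / x ^ 2) (Ioi 0) := by
  have hderiv {x : ℝ} (hx : x ≠ 0) : HasDerivAt (fun x => compensatedExp x / x ^ 2)
      ((x * (1 - exp (-x)) - 2 * compensatedExp x) / x ^ 3) x :=
    ((hasDerivAt_compensatedExp x).div (hasDerivAt_pow 2 x) (pow_ne_zero 2 hx)).congr_deriv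
      (by field_simp; ring)
  refine strictAntiOn_of_deriv_neg (convex_Ioi 0)
    (fun x hx => (hderiv (ne_of_gt hx)).continuousAt.continuousWithinAt) fun x hx => ?_
  rw [interior_Ioi] at hx
  rw [(hderiv (ne_of_gt hx)).deriv]
  exact div_neg_of_neg_of_pos
    (sub_neg.mpr (mul_one_sub_exp_neg_lt_two_mul_compensatedExp hx)) (pow_pos hx 3)

lemma strictMonoOn_compensatedExp_mul_div {v : ℝ} (hv : 0 < v) :
    StrictMonoOn (fun b => compensatedExp (b * v) / b) (Ioi 0) := fun a ha b hb hab => by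
  have := strictMonoOn_compensatedExp_div (mul_pos ha hv) (mul_pos hb hv)
    (mul_lt_mul_of_pos_right hab hv)
  dsimp only at this ⊢
  rwa [div_mul_eq_div_div, div_mul_eq_div_div, div_lt_div_iff_of_pos_right hv] at this

lemma strictAntiOn_compensatedExp_mul_div_sq {v : ℝ} (hv : 0 < v) :
    StrictAntiOn (fun b => compensatedExp (b * v) / b ^ 2) (Ioi 0) := fun a ha b hb hab => by
  have := strictAntiOn_compensatedExp_div_sq (mul_pos ha hv) (mul_pos hb hv)
    (mul_lt_mul_of_pos_right hab hv)
  dsimp only at this ⊢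
  rwa [mul_pow, mul_pow, div_mul_eq_div_div, div_mul_eq_div_div,
    div_lt_div_iff_of_pos_right (pow_pos hv 2)] at this

lemma tendsto_compensatedExp_mul_div_nhdsGT {v : ℝ} (hv : 0 ≤ v) :
    Tendsto (fun b => compensatedExp (b * v) / b) (𝓝[>] 0) (𝓝 0) := by
  refine squeeze_zero' (g := fun b => b * v ^ 2) ?_ ?_ (tendsto_nhdsWithin_of_tendsto_nhds ?_)
  · filter_upwards [self_mem_nhdsWithin] with b hb
    exact div_nonneg (compensatedExp_nonneg _) (le_of_lt hb)
  · filter_upwards [self_mem_nhdsWithin] with b (hb : 0 < b)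
    rw [div_le_iff₀ hb]
    calc compensatedExp (b * v) ≤ (b * v) ^ 2 :=
          (compensatedExp_le_min_sq_self (mul_nonneg hb.le hv)).trans (min_le_left _ _)
      _ = b * v ^ 2 * b := by ring
  · simpa using (continuous_mul_const (v ^ 2)).tendsto 0

lemma tendsto_compensatedExp_mul_div_sq_atTop {v : ℝ} (hv : 0 ≤ v) :
    Tendsto (fun b => compensatedExp (b * v) / b ^ 2) atTop (𝓝 0) := by
  refine squeeze_zero' ?_ ?_ ((tendsto_const_nhds (x := v)).div_atTop tendsto_id)
  · exact Eventually.of_forall fun b => div_nonneg (compensatedExp_nonneg _) (sq_nonneg b)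
  · filter_upwards [eventually_gt_atTop 0] with b hb
    rw [id, div_le_div_iff₀ (pow_pos hb 2) hb]
    calc compensatedExp (b * v) * b ≤ b * v * b := by
          gcongr
          exact (compensatedExp_le_min_sq_self (mul_nonneg hb.le hv)).trans (min_le_right _ _)
      _ = v * b ^ 2 := by ring

lemma integral_lt_integral_of_ae_lt {α : Type*} [MeasurableSpace α] {μ : Measure α} [NeZero μ]
    {f g : α → ℝ} (hf : Integrable f μ) (hg : Integrable g μ) (hfg : ∀ᵐ x ∂μ, f x < g x) :
    ∫ x, f x ∂μ < ∫ x, g x ∂μ := by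
  have hle : f ≤ᵐ[μ] g := hfg.mono fun _ => le_of_lt
  refine (integral_mono_ae hf hg hle).lt_of_ne fun heq => ?_
  obtain ⟨x, hlt, hx⟩ := (hfg.and ((integral_eq_iff_of_ae_le hf hg hle).1 heq)).exists
  exact hlt.ne hx

noncomputable def compensatedLaplace (μ : Measure ℝ) (b : ℝ) : ℝ := ∫ v, compensatedExp (b * v) ∂μ

section compensatedLaplace

variable {μ : Measure ℝ} (hμ : ∀ᵐ v ∂μ, 0 < v) (hint : Integrable (fun v => min (v ^ 2) v) μ)
include hμ hint

lemma integrable_compensatedExp_mul {b : ℝ} (hb : 0 ≤ b) :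
    Integrable (fun v => compensatedExp (b * v)) μ := by
  refine (hint.const_mul (max (b ^ 2) b)).mono' (by fun_prop) ?_
  filter_upwards [hμ] with v hv
  rw [Real.norm_of_nonneg (compensatedExp_nonneg _)]
  exact compensatedExp_mul_le hb hv.le

lemma strictMonoOn_compensatedLaplace_div [NeZero μ] :
    StrictMonoOn (fun b => compensatedLaplace μ b / b) (Ioi 0) := fun a ha b hb hab => by
  simp only [compensatedLaplace, ← integral_div]
  exact integral_lt_integral_of_ae_lt
    ((integrable_compensatedExp_mul hμ hint (le_of_lt ha)).div_const a)
    ((integrable_compensatedExp_mul hμ hint (le_of_lt hb)).div_const b)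
    (hμ.mono fun v hv => strictMonoOn_compensatedExp_mul_div hv ha hb hab)

lemma strictAntiOn_compensatedLaplace_div_sq [NeZero μ] :
    StrictAntiOn (fun b => compensatedLaplace μ b / b ^ 2) (Ioi 0) := fun a ha b hb hab => by
  simp only [compensatedLaplace, ← integral_div]
  exact integral_lt_integral_of_ae_lt
    ((integrable_compensatedExp_mul hμ hint (le_of_lt hb)).div_const (b ^ 2))
    ((integrable_compensatedExp_mul hμ hint (le_of_lt ha)).div_const (a ^ 2))
    (hμ.mono fun v hv => strictAntiOn_compensatedExp_mul_div_sq hv ha hb hab)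

lemma tendsto_compensatedLaplace_div_nhdsGT :
    Tendsto (fun b => compensatedLaplace μ b / b) (𝓝[>] 0) (𝓝 0) := by
  simp only [compensatedLaplace, ← integral_div]
  have := tendsto_integral_filter_of_dominated_convergence _
    (Eventually.of_forall fun b => by fun_prop) ?_ hint
    (hμ.mono fun v hv => tendsto_compensatedExp_mul_div_nhdsGT hv.le)
  · simpa using this
  filter_upwards [Ioc_mem_nhdsGT one_pos] with b ⟨hb0, hb1⟩
  filter_upwards [hμ] with v hv
  rw [Real.norm_of_nonneg (div_nonneg (compensatedExp_nonneg _) hb0.le), div_le_iff₀ hb0]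
  calc compensatedExp (b * v) ≤ max (b ^ 2) b * min (v ^ 2) v := compensatedExp_mul_le hb0.le hv.le
    _ = min (v ^ 2) v * b := by
      rw [max_eq_right (pow_le_of_le_one hb0.le hb1 two_ne_zero), mul_comm]

lemma tendsto_compensatedLaplace_div_sq_atTop :
    Tendsto (fun b => compensatedLaplace μ b / b ^ 2) atTop (𝓝 0) := by
  simp only [compensatedLaplace, ← integral_div]
  have := tendsto_integral_filter_of_dominated_convergence _
    (Eventually.of_forall fun b => by fun_prop) ?_ hint
    (hμ.mono fun v hv => tendsto_compensatedExp_mul_div_sq_atTop hv.le)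
  · simpa using this
  filter_upwards [eventually_ge_atTop 1] with b hb1
  have hb0 : 0 < b := one_pos.trans_le hb1
  filter_upwards [hμ] with v hv
  rw [Real.norm_of_nonneg (div_nonneg (compensatedExp_nonneg _) (sq_nonneg b)),
    div_le_iff₀ (pow_pos hb0 2)]
  calc compensatedExp (b * v) ≤ max (b ^ 2) b * min (v ^ 2) v := compensatedExp_mul_le hb0.le hv.le
    _ = min (v ^ 2) v * b ^ 2 := by
      rw [max_eq_left (le_self_pow₀ hb1 two_ne_zero), mul_comm]

end compensatedLaplace

/-- For a Borel measure `ρ` on `(0,∞)` with `0 < ∫ (v² ∧ v) ρ(dv) < ∞` and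
`J_ρ(b) = ∫ (e^{−bv} − 1 + bv) ρ(dv)`, the function `b ↦ J_ρ(b)/b` is strictly increasing
on `(0,∞)` with limit `0` at `0+`, and `b ↦ J_ρ(b)/b²` is strictly decreasing on `(0,∞)`
with limit `0` at `+∞`; in particular `(J_ρ(b₀)/b₀²)·b² < J_ρ(b) < (J_ρ(b₀)/b₀)·b` for
`0 < b < b₀`. -/
theorem stmt1 (ρ : Measure ℝ)
    (hpos : 0 < ∫⁻ v in Set.Ioi (0:ℝ), ENNReal.ofReal (min (v ^ 2) v) ∂ρ)
    (hfin : ∫⁻ v in Set.Ioi (0:ℝ), ENNReal.ofReal (min (v ^ 2) v) ∂ρ < ⊤)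
    (J : ℝ → ℝ)
    (hJ : ∀ b ≥ (0:ℝ), J b = ∫ v in Set.Ioi (0:ℝ), (Real.exp (-(b * v)) - 1 + b * v) ∂ρ) :
    StrictMonoOn (fun b => J b / b) (Set.Ioi 0) ∧
    Tendsto (fun b => J b / b) (nhdsWithin 0 (Set.Ioi 0)) (nhds 0) ∧
    StrictAntiOn (fun b => J b / b ^ 2) (Set.Ioi 0) ∧
    Tendsto (fun b => J b / b ^ 2) atTop (nhds 0) ∧
    ∀ b₀ > (0:ℝ), ∀ b ∈ Set.Ioo 0 b₀,
      (J b₀ / b₀ ^ 2) * b ^ 2 < J b ∧ J b < (J b₀ / b₀) * b := by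
  set μ := ρ.restrict (Ioi 0)
  have hμ : ∀ᵐ v ∂μ, 0 < v := ae_restrict_mem measurableSet_Ioi
  have hint : Integrable (fun v => min (v ^ 2) v) μ :=
    (lintegral_ofReal_ne_top_iff_integrable (by fun_prop)
      (hμ.mono fun v hv => le_min (sq_nonneg v) hv.le)).1 hfin.ne
  have : NeZero μ := ⟨fun h => by simp [μ, h] at hpos⟩
  have hJμ : EqOn J (compensatedLaplace μ) (Ioi 0) := fun b hb => hJ b (le_of_lt hb)
  have hdiv : EqOn (fun b => compensatedLaplace μ b / b) (fun b => J b / b) (Ioi 0) :=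
    fun b hb => by simp only [hJμ hb]
  have hdiv_sq : EqOn (fun b => compensatedLaplace μ b / b ^ 2) (fun b => J b / b ^ 2) (Ioi 0) :=
    fun b hb => by simp only [hJμ hb]
  have hmono := (strictMonoOn_compensatedLaplace_div hμ hint).congr hdiv
  have hanti := (strictAntiOn_compensatedLaplace_div_sq hμ hint).congr hdiv_sq
  refine ⟨hmono, (tendsto_compensatedLaplace_div_nhdsGT hμ hint).congr'
      (eventuallyEq_nhdsWithin_of_eqOn hdiv), hanti,
    (tendsto_compensatedLaplace_div_sq_atTop hμ hint).congr'
      (eventually_gt_atTop 0 |>.mono fun b hb => hdiv_sq hb), fun b₀ hb₀ b ⟨hb, hbb₀⟩ => ⟨?_, ?_⟩⟩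
  · exact (lt_div_iff₀ (pow_pos hb 2)).1 (hanti hb hb₀ hbb₀)
  · exact (div_lt_iff₀ hb).1 (hmono hb hb₀ hbb₀)
end

section
/- The function H : [0, +∞) → ℝ defined by H(z) = e^{−z} − 1 + z is convex and strictly increasing on [0, +∞), and for every z ≥ 0 and every t > 0 it satisfies min{1, t²}·H(z) ≤ H(t·z) ≤ max{1, t²}·H(z). -/
/-! The derivative `1 - e^{-z}` of `H(z) = e^{-z} - 1 + z` is increasing, and positive for `z > 0`,
which gives convexity and strict monotonicity. For `t ≥ 1`, comparing derivatives from `z = 0`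
gives first `1 - e^{-tz} ≤ t (1 - e^{-z})` and then `H(tz) ≤ t² H(z)`; applied to `tz` and `t⁻¹`
this is the lower bound `t² H(z) ≤ H(tz)` for `t ≤ 1`. The two remaining bounds are monotonicity. -/

open Real Set

theorem le_of_hasDerivAt_le_of_le {f g f' g' : ℝ → ℝ} {a z : ℝ}
    (hf : ∀ x, HasDerivAt f (f' x) x) (hg : ∀ x, HasDerivAt g (g' x) x) (ha : f a ≤ g a)
    (hfg : ∀ x ≥ a, f' x ≤ g' x) (hz : a ≤ z) : f z ≤ g z :=
  image_le_of_deriv_right_le_deriv_boundary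
    (fun x _ ↦ (hf x).continuousAt.continuousWithinAt) (fun x _ ↦ (hf x).hasDerivWithinAt) ha
    (fun x _ ↦ (hg x).continuousAt.continuousWithinAt) (fun x _ ↦ (hg x).hasDerivWithinAt)
    (fun x hx ↦ hfg x hx.1) ⟨hz, le_rfl⟩

theorem hasDerivAt_exp_neg_mul (t x : ℝ) :
    HasDerivAt (fun x ↦ exp (-(t * x))) (-t * exp (-(t * x))) x := by
  simpa [mul_comm] using ((hasDerivAt_id x).const_mul t).neg.exp

theorem one_sub_exp_neg_mul_le {t z : ℝ} (ht : 1 ≤ t) (hz : 0 ≤ z) :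
    1 - exp (-(t * z)) ≤ t * (1 - exp (-z)) := by
  refine le_of_hasDerivAt_le_of_le (fun x ↦ (hasDerivAt_exp_neg_mul t x).const_sub 1)
    (fun x ↦ ((hasDerivAt_neg x).exp.const_sub 1).const_mul t)
    (by simp) (fun x hx ↦ ?_) hz
  have : exp (-(t * x)) ≤ exp (-x) := exp_le_exp.mpr (by nlinarith)
  simp only [neg_mul, neg_neg, mul_neg, mul_one]
  nlinarith

noncomputable def expNegSubOneAdd (z : ℝ) : ℝ := exp (-z) - 1 + z

theorem hasDerivAt_expNegSubOneAdd (x : ℝ) :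
    HasDerivAt expNegSubOneAdd (1 - exp (-x)) x :=
  (((hasDerivAt_neg x).exp.sub_const 1).add (hasDerivAt_id' x)).congr_deriv (by ring)

theorem hasDerivAt_expNegSubOneAdd_mul (t x : ℝ) :
    HasDerivAt (fun x ↦ expNegSubOneAdd (t * x)) (t * (1 - exp (-(t * x)))) x :=
  ((hasDerivAt_expNegSubOneAdd (t * x)).comp x
    ((hasDerivAt_id' x).const_mul t)).congr_deriv (by ring)

theorem convexOn_expNegSubOneAdd : ConvexOn ℝ univ expNegSubOneAdd := by
  refine Monotone.convexOn_univ_of_deriv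
    (fun x ↦ (hasDerivAt_expNegSubOneAdd x).differentiableAt) fun x y hxy ↦ ?_
  simp only [(hasDerivAt_expNegSubOneAdd _).deriv]
  gcongr

theorem strictMonoOn_expNegSubOneAdd : StrictMonoOn expNegSubOneAdd (Ici 0) := by
  refine strictMonoOn_of_hasDerivWithinAt_pos (convex_Ici 0)
    (fun x _ ↦ (hasDerivAt_expNegSubOneAdd x).continuousAt.continuousWithinAt)
    (fun x _ ↦ (hasDerivAt_expNegSubOneAdd x).hasDerivWithinAt) fun x hx ↦ ?_
  rw [interior_Ici, mem_Ioi] at hx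
  simpa using hx

theorem expNegSubOneAdd_mul_le {t z : ℝ} (ht : 1 ≤ t) (hz : 0 ≤ z) :
    expNegSubOneAdd (t * z) ≤ t ^ 2 * expNegSubOneAdd z := by
  refine le_of_hasDerivAt_le_of_le (hasDerivAt_expNegSubOneAdd_mul t)
    (fun x ↦ (hasDerivAt_expNegSubOneAdd x).const_mul (t ^ 2)) (by simp [expNegSubOneAdd])
    (fun x hx ↦ ?_) hz
  calc t * (1 - exp (-(t * x))) ≤ t * (t * (1 - exp (-x))) := by
        gcongr; exact one_sub_exp_neg_mul_le ht hx
    _ = t ^ 2 * (1 - exp (-x)) := by ring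

theorem sq_mul_expNegSubOneAdd_le {t z : ℝ} (ht₀ : 0 < t) (ht₁ : t ≤ 1) (hz : 0 ≤ z) :
    t ^ 2 * expNegSubOneAdd z ≤ expNegSubOneAdd (t * z) := by
  have h := expNegSubOneAdd_mul_le (one_le_inv₀ ht₀ |>.mpr ht₁) (mul_nonneg ht₀.le hz)
  rw [inv_mul_cancel_left₀ ht₀.ne'] at h
  calc t ^ 2 * expNegSubOneAdd z ≤ t ^ 2 * (t⁻¹ ^ 2 * expNegSubOneAdd (t * z)) := by gcongr
    _ = expNegSubOneAdd (t * z) := by field_simp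

/-- The function `H(z) = e^{−z} − 1 + z` is convex and strictly increasing on `[0,∞)`,
and satisfies `min{1,t²}·H(z) ≤ H(t·z) ≤ max{1,t²}·H(z)` for all `z ≥ 0`, `t > 0`. -/
theorem stmt2 :
    ConvexOn ℝ (Set.Ici 0) (fun z : ℝ => Real.exp (-z) - 1 + z) ∧
    StrictMonoOn (fun z : ℝ => Real.exp (-z) - 1 + z) (Set.Ici 0) ∧
    ∀ z ≥ (0:ℝ), ∀ t > (0:ℝ),
      min 1 (t ^ 2) * (Real.exp (-z) - 1 + z) ≤ Real.exp (-(t * z)) - 1 + t * z ∧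
      Real.exp (-(t * z)) - 1 + t * z ≤ max 1 (t ^ 2) * (Real.exp (-z) - 1 + z) := by
  refine ⟨convexOn_expNegSubOneAdd.subset (subset_univ _) (convex_Ici 0),
    strictMonoOn_expNegSubOneAdd, fun z hz t ht ↦ ?_⟩
  have hmono := strictMonoOn_expNegSubOneAdd.monotoneOn
  rcases le_total t 1 with ht₁ | ht₁
  · have hsq : t ^ 2 ≤ 1 := pow_le_one₀ ht.le ht₁
    rw [min_eq_right hsq, max_eq_left hsq, one_mul]
    exact ⟨sq_mul_expNegSubOneAdd_le ht ht₁ hz,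
      hmono (mul_nonneg ht.le hz) hz (mul_le_of_le_one_left hz ht₁)⟩
  · have hsq : 1 ≤ t ^ 2 := one_le_pow₀ ht₁
    rw [min_eq_left hsq, max_eq_right hsq, one_mul]
    exact ⟨hmono hz (mul_nonneg ht.le hz) (le_mul_of_one_le_left hz ht₁),
      expNegSubOneAdd_mul_le ht₁ hz⟩
end

section
/- Let λ be a finite Borel measure on the unit sphere S^{d−1} ⊂ ℝ^d and γ a Borel measure on (0, +∞) with ∫₀^∞ (r² ∧ r) γ(dr) < +∞. Let H(z) = e^{−z} − 1 + z, and for z ∈ ℝ^d set J(z) = ∫_{S^{d−1}} ∫₀^∞ H(r·⟨z, ξ⟩) γ(dr) λ(dξ), and for s ≥ 0 set M(s) = ∫_{S^{d−1}} ∫₀^∞ H(s·r·⟨G_∞, ξ⟩) γ(dr) λ(dξ), where G_∞ ∈ S^{d−1} is a fixed unit vector. Let G : (0, +∞) → ℝ^d satisfy G(x) ≠ 0 and λ{ ξ : ⟨G(x), ξ⟩ < 0 } = 0 for every x > 0, and assume λ{ ξ : ⟨G_∞, ξ⟩ < 0 } = 0 and λ{ ξ : ⟨G_∞, ξ⟩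 > 0 } > 0. Then for every ε₀ > 0 there exists δ > 0 such that for every b ≥ 0 and every x > 0 with |G(x)/|G(x)| − G_∞| ≤ δ, one has (1 − ε₀)·M(b·|G(x)|) ≤ J(b·G(x)) ≤ (1 + ε₀)·M(b·|G(x)|). -/
/-!
Write `ψ(y) = ∫ H(r y) γ(dr)`. With `s = b |G(x)|` and `u = G(x) / |G(x)|`, the two sides are
`∫ ψ(s ⟨u, ξ⟩) λ(dξ)` and `∫ ψ(s ⟨G_∞, ξ⟩) λ(dξ)`. From `H`, the function `ψ` inherits that
`ψ(y) / y` is nondecreasing and `ψ(y) / y²` nonincreasing on `[0, ∞)`, and this is all that is used;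
both properties survive the rescaling by `s`, which is why `δ` can be chosen uniformly in `b, x`.

Fix `c > 0` with `m = λ{⟨G_∞, ξ⟩ ≥ c} > 0`, so that `ψ(c) ≤ M / m`. On `{⟨G_∞, ξ⟩ ≥ η}` a
perturbation of size `η²` of the argument is a relative perturbation by a factor `1 ± η`, which
changes `ψ` by a factor `(1 ± η)²`. On `{⟨G_∞, ξ⟩ < η}` both arguments are below `2η`, so both
integrands are at most `(2η / c) ψ(c)`, and this region contributes `O(η) M`.
-/

open Real Filter Set MeasureTheory

/-- On `[0, ∞)`, `φ ≥ 0`, `φ x / x` is nondecreasing and `φ x / x ^ 2` is nonincreasing. -/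
structure HasLinQuadScaling (φ : ℝ → ℝ) : Prop where
  nonneg : ∀ ⦃x⦄, 0 ≤ x → 0 ≤ φ x
  le_mul_of_le_one : ∀ ⦃α x⦄, 0 ≤ α → α ≤ 1 → 0 ≤ x → φ (α * x) ≤ α * φ x
  le_sq_mul_of_one_le : ∀ ⦃c x⦄, 1 ≤ c → 0 ≤ x → φ (c * x) ≤ c ^ 2 * φ x

namespace HasLinQuadScaling

variable {φ : ℝ → ℝ}

theorem le_div_mul (hφ : HasLinQuadScaling φ) {y c : ℝ} (hy : 0 ≤ y) (hyc : y ≤ c) (hc : 0 < c) :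
    φ y ≤ y / c * φ c := by
  simpa [div_mul_cancel₀ y hc.ne'] using
    hφ.le_mul_of_le_one (div_nonneg hy hc.le) ((div_le_one hc).2 hyc) hc.le

theorem monotoneOn (hφ : HasLinQuadScaling φ) : MonotoneOn φ (Ici 0) := by
  intro x hx y hy hxy
  rcases (show (0:ℝ) ≤ y from hy).eq_or_lt with rfl | hy0
  · rw [le_antisymm hxy hx]
  calc φ x ≤ x / y * φ y := hφ.le_div_mul hx hxy hy0
    _ ≤ φ y := mul_le_of_le_one_left (hφ.nonneg hy) ((div_le_one hy0).2 hxy)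

theorem comp_mul (hφ : HasLinQuadScaling φ) {s : ℝ} (hs : 0 ≤ s) :
    HasLinQuadScaling (fun x => φ (s * x)) where
  nonneg _ hx := hφ.nonneg (mul_nonneg hs hx)
  le_mul_of_le_one α x hα0 hα1 hx := by
    simpa only [mul_left_comm s α] using hφ.le_mul_of_le_one hα0 hα1 (mul_nonneg hs hx)
  le_sq_mul_of_one_le c x hc hx := by
    simpa only [mul_left_comm s c] using hφ.le_sq_mul_of_one_le hc (mul_nonneg hs hx)

theorem apply_mem_Icc_of_abs_sub_le (hφ : HasLinQuadScaling φ) {x y η : ℝ} (hx : 0 ≤ x)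
    (hη0 : 0 ≤ η) (hη1 : η < 1) (hxy : |y - x| ≤ η * x) :
    φ y ∈ Icc ((1 - 2 * η) * φ x) ((1 + 3 * η) * φ x) := by
  obtain ⟨hlo, hhi⟩ := abs_sub_le_iff.1 hxy
  have hy : (1 - η) * x ≤ y := by linarith
  have hφx := hφ.nonneg hx
  have hpos : 0 < 1 - η := by linarith
  constructor
  · have hx' : φ x ≤ ((1 - η)⁻¹) ^ 2 * φ ((1 - η) * x) := by
      simpa [inv_mul_cancel_left₀ hpos.ne'] using
        hφ.le_sq_mul_of_one_le (one_le_inv₀ hpos |>.2 (by linarith)) (mul_nonneg hpos.le hx)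
    have hmono := hφ.monotoneOn (mul_nonneg hpos.le hx) ((mul_nonneg hpos.le hx).trans hy) hy
    have : (1 - η) ^ 2 * φ x ≤ φ ((1 - η) * x) := by
      calc (1 - η) ^ 2 * φ x ≤ (1 - η) ^ 2 * (((1 - η)⁻¹) ^ 2 * φ ((1 - η) * x)) := by gcongr
        _ = φ ((1 - η) * x) := by field_simp
    nlinarith [mul_nonneg (sq_nonneg η) hφx]
  · have hmono := hφ.monotoneOn ((mul_nonneg hpos.le hx).trans hy) (by positivity : 0 ≤ (1 + η) * x)
      (by linarith)
    have := hφ.le_sq_mul_of_one_le (by linarith : 1 ≤ 1 + η) hx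
    nlinarith [mul_nonneg (mul_nonneg hη0 hpos.le) hφx]

end HasLinQuadScaling

noncomputable def expNegRemainder (z : ℝ) : ℝ := exp (-z) - 1 + z

theorem expNegRemainder_nonneg (z : ℝ) : 0 ≤ expNegRemainder z := by
  have := add_one_le_exp (-z)
  unfold expNegRemainder; linarith

theorem expNegRemainder_le_sq_div {z : ℝ} (hz : 0 ≤ z) : expNegRemainder z ≤ z ^ 2 / (1 + z) := by
  have h : exp (-z) ≤ (1 + z)⁻¹ := by
    rw [exp_neg]; gcongr; linarith [add_one_le_exp z]
  calc expNegRemainder z ≤ (1 + z)⁻¹ - 1 + z := by unfold expNegRemainder; linarith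
    _ = z ^ 2 / (1 + z) := by field_simp; ring

theorem hasDerivAt_expNegRemainder (z : ℝ) : HasDerivAt expNegRemainder (1 - exp (-z)) z :=
  ((((hasDerivAt_neg z).exp).sub_const 1).add (hasDerivAt_id' z)).congr_deriv (by ring)

theorem continuous_expNegRemainder : Continuous expNegRemainder := by
  unfold expNegRemainder; fun_prop

theorem expNegRemainder_mul_le_of_le_one {α : ℝ} (hα0 : 0 ≤ α) (hα1 : α ≤ 1) (z : ℝ) :
    expNegRemainder (α * z) ≤ α * expNegRemainder z := by
  have hconv := convexOn_exp.2 (mem_univ (-z)) (mem_univ 0) hα0 (sub_nonneg.2 hα1)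
    (add_sub_cancel α 1)
  simp only [smul_eq_mul, mul_zero, add_zero, exp_zero, mul_one, mul_neg] at hconv
  unfold expNegRemainder; linarith

/-- Bernoulli's inequality for `1 + (exp (-w) - 1)` raised to the power `c`. -/
theorem one_sub_exp_neg_mul_le_s5 {c : ℝ} (hc : 1 ≤ c) (w : ℝ) :
    1 - exp (-(c * w)) ≤ c * (1 - exp (-w)) := by
  have h := one_add_mul_self_le_rpow_one_add (by linarith [exp_pos (-w)] : -1 ≤ exp (-w) - 1) hc
  rw [add_sub_cancel, ← exp_mul, neg_mul, mul_comm w] at h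
  linarith

theorem expNegRemainder_mul_le_sq_mul {c z : ℝ} (hc : 1 ≤ c) (hz : 0 ≤ z) :
    expNegRemainder (c * z) ≤ c ^ 2 * expNegRemainder z := by
  set f := fun z => c ^ 2 * expNegRemainder z - expNegRemainder (c * z)
  have hf (w : ℝ) : HasDerivAt f (c * (c * (1 - exp (-w)) - (1 - exp (-(c * w))))) w :=
    (((hasDerivAt_expNegRemainder w).const_mul (c ^ 2)).sub
      ((hasDerivAt_expNegRemainder (c * w)).comp w ((hasDerivAt_id' w).const_mul c))).congr_deriv
      (by ring)
  have hmono : Monotone f := monotone_of_deriv_nonneg (fun w => (hf w).differentiableAt)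
    fun w => (hf w).deriv ▸ mul_nonneg (by linarith) (sub_nonneg.2 (one_sub_exp_neg_mul_le_s5 hc w))
  simpa [f, expNegRemainder] using hmono hz

theorem expNegRemainder_mul_le {r y : ℝ} (hr : 0 ≤ r) (hy : 0 ≤ y) :
    expNegRemainder (r * y) ≤ max (y ^ 2) y * min (r ^ 2) r := by
  have hry : 0 ≤ r * y := mul_nonneg hr hy
  have h := expNegRemainder_le_sq_div hry
  rcases le_total r 1 with hr1 | hr1
  · rw [min_eq_left (by nlinarith)]
    calc expNegRemainder (r * y) ≤ (r * y) ^ 2 := h.trans (div_le_self (sq_nonneg _) (by linarith))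
      _ = y ^ 2 * r ^ 2 := by ring
      _ ≤ _ := by gcongr; exact le_max_left _ _
  · rw [min_eq_right (by nlinarith)]
    calc expNegRemainder (r * y) ≤ r * y := h.trans <| by
          rw [div_le_iff₀ (by linarith)]; nlinarith
      _ = y * r := by ring
      _ ≤ _ := by gcongr; exact le_max_right _ _

theorem hasLinQuadScaling_expNegRemainder : HasLinQuadScaling expNegRemainder where
  nonneg z _ := expNegRemainder_nonneg z
  le_mul_of_le_one _ z hα0 hα1 _ := expNegRemainder_mul_le_of_le_one hα0 hα1 z
  le_sq_mul_of_one_le _ _ hc hz := expNegRemainder_mul_le_sq_mul hc hz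

theorem integrableOn_min_sq_self {γ : Measure ℝ}
    (hγ : ∫⁻ r in Ioi 0, ENNReal.ofReal (min (r ^ 2) r) ∂γ < ⊤) :
    IntegrableOn (fun r => min (r ^ 2) r) (Ioi 0) γ := by
  refine ⟨by fun_prop, (hasFiniteIntegral_iff_ofReal ?_).2 hγ⟩
  filter_upwards [ae_restrict_mem measurableSet_Ioi] with r (hr : 0 < r)
  positivity

theorem integrableOn_expNegRemainder_mul {γ : Measure ℝ}
    (hγ : ∫⁻ r in Ioi 0, ENNReal.ofReal (min (r ^ 2) r) ∂γ < ⊤) {y : ℝ} (hy : 0 ≤ y) :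
    IntegrableOn (fun r => expNegRemainder (r * y)) (Ioi 0) γ := by
  refine ((integrableOn_min_sq_self hγ).const_mul (max (y ^ 2) y)).mono'
    (continuous_expNegRemainder.comp (by fun_prop)).aestronglyMeasurable ?_
  filter_upwards [ae_restrict_mem measurableSet_Ioi] with r (hr : 0 < r)
  rw [Real.norm_of_nonneg (expNegRemainder_nonneg _)]
  exact expNegRemainder_mul_le hr.le hy

noncomputable def radialExponent (γ : Measure ℝ) (y : ℝ) : ℝ :=
  ∫ r in Ioi 0, expNegRemainder (r * y) ∂γ

theorem radialExponent_mul_eq (γ : Measure ℝ) (s y : ℝ) :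
    radialExponent γ (s * y) = ∫ r in Ioi 0, (exp (-(s * (r * y))) - 1 + s * (r * y)) ∂γ := by
  rw [radialExponent]
  congr 1 with r
  unfold expNegRemainder
  ring_nf

theorem radialExponent_le_mul {γ : Measure ℝ}
    (hγ : ∫⁻ r in Ioi 0, ENNReal.ofReal (min (r ^ 2) r) ∂γ < ⊤) {y y' k : ℝ} (hy : 0 ≤ y)
    (hy' : 0 ≤ y') (h : ∀ r, 0 < r → expNegRemainder (r * y) ≤ k * expNegRemainder (r * y')) :
    radialExponent γ y ≤ k * radialExponent γ y' := by
  rw [radialExponent, radialExponent, ← integral_const_mul]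
  exact setIntegral_mono_on (integrableOn_expNegRemainder_mul hγ hy)
    ((integrableOn_expNegRemainder_mul hγ hy').const_mul k) measurableSet_Ioi fun r hr => h r hr

theorem hasLinQuadScaling_radialExponent {γ : Measure ℝ}
    (hγ : ∫⁻ r in Ioi 0, ENNReal.ofReal (min (r ^ 2) r) ∂γ < ⊤) :
    HasLinQuadScaling (radialExponent γ) where
  nonneg _ _ := integral_nonneg fun _ => expNegRemainder_nonneg _
  le_mul_of_le_one α y hα0 hα1 hy := radialExponent_le_mul hγ (mul_nonneg hα0 hy) hy fun r hr => by
    simpa only [mul_left_comm r α] using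
      hasLinQuadScaling_expNegRemainder.le_mul_of_le_one hα0 hα1 (mul_nonneg hr.le hy)
  le_sq_mul_of_one_le c y hc hy := radialExponent_le_mul hγ (by positivity) hy fun r hr => by
    simpa only [mul_left_comm r c] using
      hasLinQuadScaling_expNegRemainder.le_sq_mul_of_one_le hc (mul_nonneg hr.le hy)

section Comparison

variable {X : Type*} [MeasurableSpace X] {μ : Measure X} {φ : ℝ → ℝ}

theorem exists_pos_measure_setOf_le (t : X → ℝ) (h : 0 < μ {x | 0 < t x}) :
    ∃ c > 0, 0 < μ {x | c ≤ t x} := by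
  by_contra! h'
  have hsub : {x | 0 < t x} ⊆ ⋃ n : ℕ, {x | 1 / ((n : ℝ) + 1) ≤ t x} := fun x (hx : 0 < t x) =>
    mem_iUnion.2 ((exists_nat_one_div_lt hx).imp fun _ hn => hn.le)
  exact h.ne' (measure_mono_null hsub
    (measure_iUnion_null fun n => nonpos_iff_eq_zero.1 (h' _ (by positivity))))

namespace HasLinQuadScaling

theorem integrable_comp [IsFiniteMeasure μ] (hφ : HasLinQuadScaling φ) {f : X → ℝ} {B : ℝ}
    (hf : AEMeasurable f μ) (hfB : ∀ᵐ x ∂μ, 0 ≤ f x ∧ f x ≤ B) :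
    Integrable (fun x => φ (f x)) μ := by
  have hmono : Monotone fun y => φ (max y 0) := fun y y' h =>
    hφ.monotoneOn (le_max_right y 0) (le_max_right y' 0) (max_le_max_right 0 h)
  have hmeas : AEStronglyMeasurable (fun x => φ (f x)) μ :=
    (hmono.measurable.comp_aemeasurable hf).aestronglyMeasurable.congr <| by
      filter_upwards [hfB] with x hx
      simp [max_eq_left hx.1]
  refine (integrable_const (φ B)).mono' hmeas ?_
  filter_upwards [hfB] with x hx
  rw [norm_of_nonneg (hφ.nonneg hx.1)]
  exact hφ.monotoneOn hx.1 (hx.1.trans hx.2) hx.2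

variable {t : X → ℝ}

theorem mul_measureReal_le_integral (hφ : HasLinQuadScaling φ) (ht : Measurable t)
    (ht0 : ∀ᵐ x ∂μ, 0 ≤ t x) (hint : Integrable (fun x => φ (t x)) μ) {c : ℝ} (hc : 0 ≤ c)
    (hfin : μ {x | c ≤ t x} ≠ ⊤) :
    φ c * μ.real {x | c ≤ t x} ≤ ∫ x, φ (t x) ∂μ :=
  (setIntegral_ge_of_const_le_real (measurableSet_le measurable_const ht) hfin
    (fun _ hx => hφ.monotoneOn hc (hc.trans hx) hx) hint.integrableOn).trans
    (setIntegral_le_integral hint (ht0.mono fun _ hx => hφ.nonneg hx))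

/-- Where `f ≤ κ`, the integrand `φ ∘ f` is at most `κ / c · φ c`, and `φ c` is controlled by
the integral of `φ ∘ t` over `{c ≤ t}`. -/
theorem setIntegral_le_mul_integral [IsFiniteMeasure μ] (hφ : HasLinQuadScaling φ)
    (ht : Measurable t) (ht0 : ∀ᵐ x ∂μ, 0 ≤ t x) (hint : Integrable (fun x => φ (t x)) μ)
    {c κ : ℝ} (hc : 0 < c) (hm : 0 < μ {x | c ≤ t x}) (hκ : 0 ≤ κ) (hκc : κ ≤ c)
    {f : X → ℝ} {s : Set X} (hf : ∀ᵐ x ∂μ, x ∈ s → 0 ≤ f x ∧ f x ≤ κ) :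
    ∫ x in s, φ (f x) ∂μ ≤ μ.real univ / (c * μ.real {x | c ≤ t x}) * κ * ∫ x, φ (t x) ∂μ := by
  have hm' : 0 < μ.real {x | c ≤ t x} := ENNReal.toReal_pos hm.ne' (measure_ne_top _ _)
  have hφc := hφ.nonneg hc.le
  calc ∫ x in s, φ (f x) ∂μ ≤ κ / c * φ c * μ.real s := by
        refine (Real.le_norm_self _).trans
          (norm_setIntegral_le_of_norm_le_const_ae' (measure_lt_top _ _) ?_)
        filter_upwards [hf] with x hx hxs
        obtain ⟨h0, h1⟩ := hx hxs
        rw [norm_of_nonneg (hφ.nonneg h0)]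
        exact (hφ.le_div_mul h0 (h1.trans hκc) hc).trans (by gcongr)
    _ ≤ κ / c * φ c * μ.real univ := by gcongr; exacts [measure_ne_top _ _, subset_univ s]
    _ = μ.real univ / (c * μ.real {x | c ≤ t x}) * κ * (φ c * μ.real {x | c ≤ t x}) := by
        field_simp
    _ ≤ _ := by gcongr; exact hφ.mul_measureReal_le_integral ht ht0 hint hc.le (measure_ne_top _ _)

theorem setIntegral_comp_mem_Icc_of_abs_sub_le (hφ : HasLinQuadScaling φ) {a : X → ℝ}
    (hint_t : Integrable (fun x => φ (t x)) μ) (hint_a : Integrable (fun x => φ (a x)) μ)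
    {η : ℝ} (hη0 : 0 ≤ η) (hη1 : η < 1) {s : Set X} (hs : MeasurableSet s)
    (h : ∀ᵐ x ∂μ, x ∈ s → 0 ≤ t x ∧ |a x - t x| ≤ η * t x) :
    ∫ x in s, φ (a x) ∂μ ∈
      Icc ((1 - 2 * η) * ∫ x in s, φ (t x) ∂μ) ((1 + 3 * η) * ∫ x in s, φ (t x) ∂μ) := by
  have hnear : ∀ᵐ x ∂μ, x ∈ s →
      φ (a x) ∈ Icc ((1 - 2 * η) * φ (t x)) ((1 + 3 * η) * φ (t x)) :=
    h.mono fun x hx hxs => hφ.apply_mem_Icc_of_abs_sub_le (hx hxs).1 hη0 hη1 (hx hxs).2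
  simp only [mem_Icc, ← integral_const_mul]
  exact ⟨setIntegral_mono_on_ae (hint_t.const_mul _).integrableOn hint_a.integrableOn hs
      (hnear.mono fun x h hx => (h hx).1),
    setIntegral_mono_on_ae hint_a.integrableOn (hint_t.const_mul _).integrableOn hs
      (hnear.mono fun x h hx => (h hx).2)⟩

end HasLinQuadScaling

theorem exists_pos_integral_comp_comparison (μ : Measure X) [IsFiniteMeasure μ] {t : X → ℝ}
    {T : ℝ} (ht : Measurable t) (htT : ∀ᵐ x ∂μ, 0 ≤ t x ∧ t x ≤ T)
    (hpos : 0 < μ {x | 0 < t x}) {ε : ℝ} (hε : 0 < ε) :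
    ∃ δ > 0, ∀ φ, HasLinQuadScaling φ → ∀ a : X → ℝ, Measurable a →
      (∀ᵐ x ∂μ, 0 ≤ a x ∧ |a x - t x| ≤ δ) →
        (1 - ε) * ∫ x, φ (t x) ∂μ ≤ ∫ x, φ (a x) ∂μ ∧
          ∫ x, φ (a x) ∂μ ≤ (1 + ε) * ∫ x, φ (t x) ∂μ := by
  obtain ⟨c, hc, hm⟩ := exists_pos_measure_setOf_le t hpos
  set K := μ.real univ / (c * μ.real {x | c ≤ t x})
  have hK : 0 ≤ K := by positivity
  set η := min (min (1 / 2) (c / 2)) (ε / (3 + 2 * K))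
  have hη0 : 0 < η := by positivity
  have hη1 : η ≤ 1 / 2 := (min_le_left _ _).trans (min_le_left _ _)
  have hηc : η ≤ c / 2 := (min_le_left _ _).trans (min_le_right _ _)
  have hηε : (3 + 2 * K) * η ≤ ε := (le_div_iff₀' (by positivity)).1 (min_le_right _ _)
  refine ⟨η ^ 2, by positivity, fun φ hφ a ha hat => ?_⟩
  have ht0 : ∀ᵐ x ∂μ, 0 ≤ t x := htT.mono fun _ h => h.1
  have hint_t := hφ.integrable_comp ht.aemeasurable htT
  have hint_a : Integrable (fun x => φ (a x)) μ := hφ.integrable_comp (B := T + η ^ 2)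
    ha.aemeasurable <| by
      filter_upwards [htT, hat] with x h1 h2
      exact ⟨h2.1, by linarith [(abs_sub_le_iff.1 h2.2).1]⟩
  set A := {x | η ≤ t x}
  have hA : MeasurableSet A := measurableSet_le measurable_const ht
  -- `δ = η ^ 2` makes the error `|a - t|` relatively small, `≤ η * t`, on `A`
  obtain ⟨hlowerA, hupperA⟩ := hφ.setIntegral_comp_mem_Icc_of_abs_sub_le hint_t hint_a hη0.le
    (by linarith) hA <| by
      filter_upwards [ht0, hat] with x ht' ha' (hx : η ≤ t x)
      exact ⟨ht', ha'.2.trans (by nlinarith)⟩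
  have hsmall_t : ∫ x in Aᶜ, φ (t x) ∂μ ≤ K * η * ∫ x, φ (t x) ∂μ :=
    hφ.setIntegral_le_mul_integral ht ht0 hint_t hc hm hη0.le (by linarith) <| by
      filter_upwards [ht0] with x hx (hxA : ¬η ≤ t x)
      exact ⟨hx, (not_le.1 hxA).le⟩
  have hsmall_a : ∫ x in Aᶜ, φ (a x) ∂μ ≤ K * (2 * η) * ∫ x, φ (t x) ∂μ :=
    hφ.setIntegral_le_mul_integral ht ht0 hint_t hc hm (by positivity) (by linarith) <| by
      filter_upwards [hat] with x hx (hxA : ¬η ≤ t x)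
      have := (abs_sub_le_iff.1 hx.2).1
      exact ⟨hx.1, by nlinarith [not_le.1 hxA]⟩
  have hsplit_t := integral_add_compl hA hint_t
  have hsplit_a := integral_add_compl hA hint_a
  have hI := integral_nonneg_of_ae (ht0.mono fun _ hx => hφ.nonneg hx)
  have hIc_t : 0 ≤ ∫ x in Aᶜ, φ (t x) ∂μ :=
    setIntegral_nonneg_of_ae_restrict ((ae_restrict_of_ae ht0).mono fun _ hx => hφ.nonneg hx)
  have hIc_a : 0 ≤ ∫ x in Aᶜ, φ (a x) ∂μ :=
    setIntegral_nonneg_of_ae_restrict ((ae_restrict_of_ae hat).mono fun _ hx => hφ.nonneg hx.1)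
  constructor
  · nlinarith [mul_nonneg hη0.le hIc_t, mul_nonneg (by nlinarith : 0 ≤ ε - (2 + K) * η) hI]
  · nlinarith [mul_nonneg hη0.le hIc_t, mul_nonneg (by nlinarith : 0 ≤ ε - (3 + 2 * K) * η) hI]

end Comparison

/-- Proposition on spherical Lévy noise: with `H(z) = e^{−z} − 1 + z`,
`J(z) = ∫∫ H(r⟨z,ξ⟩) γ(dr) λ(dξ)` and `M(s) = ∫∫ H(s·r·⟨G_∞,ξ⟩) γ(dr) λ(dξ)`,
for every `ε₀ > 0` there is `δ > 0` such that whenever `b ≥ 0`, `x > 0` and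
`|G(x)/|G(x)| − G_∞| ≤ δ`, one has
`(1 − ε₀)·M(b·|G(x)|) ≤ J(b·G(x)) ≤ (1 + ε₀)·M(b·|G(x)|)`. -/
theorem stmt5 (d : ℕ)
    (lam : Measure (EuclideanSpace ℝ (Fin d))) [IsFiniteMeasure lam]
    (hsph : lam (Metric.sphere (0 : EuclideanSpace ℝ (Fin d)) 1)ᶜ = 0)
    (γ : Measure ℝ)
    (hγ : ∫⁻ r in Set.Ioi (0:ℝ), ENNReal.ofReal (min (r ^ 2) r) ∂γ < ⊤)
    (Ginf : EuclideanSpace ℝ (Fin d)) (hGinf : ‖Ginf‖ = 1)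
    (G : ℝ → EuclideanSpace ℝ (Fin d))
    (hGne : ∀ x > (0:ℝ), G x ≠ 0)
    (hGpos : ∀ x > (0:ℝ), lam {ξ | (inner ℝ (G x) ξ : ℝ) < 0} = 0)
    (hpos1 : lam {ξ | (inner ℝ Ginf ξ : ℝ) < 0} = 0)
    (hpos2 : 0 < lam {ξ | 0 < (inner ℝ Ginf ξ : ℝ)}) :
    ∀ ε₀ > (0:ℝ), ∃ δ > (0:ℝ), ∀ b ≥ (0:ℝ), ∀ x > (0:ℝ),
      ‖(‖G x‖)⁻¹ • G x - Ginf‖ ≤ δ →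
        (1 - ε₀) * (∫ ξ, (∫ r in Set.Ioi (0:ℝ),
            (Real.exp (-(b * ‖G x‖ * (r * (inner ℝ Ginf ξ : ℝ)))) - 1
              + b * ‖G x‖ * (r * (inner ℝ Ginf ξ : ℝ))) ∂γ) ∂lam)
          ≤ (∫ ξ, (∫ r in Set.Ioi (0:ℝ),
            (Real.exp (-(r * (inner ℝ (b • G x) ξ : ℝ))) - 1
              + r * (inner ℝ (b • G x) ξ : ℝ)) ∂γ) ∂lam) ∧
        (∫ ξ, (∫ r in Set.Ioi (0:ℝ),
            (Real.exp (-(r * (inner ℝ (b • G x) ξ : ℝ))) - 1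
              + r * (inner ℝ (b • G x) ξ : ℝ)) ∂γ) ∂lam)
          ≤ (1 + ε₀) * (∫ ξ, (∫ r in Set.Ioi (0:ℝ),
            (Real.exp (-(b * ‖G x‖ * (r * (inner ℝ Ginf ξ : ℝ)))) - 1
              + b * ‖G x‖ * (r * (inner ℝ Ginf ξ : ℝ))) ∂γ) ∂lam) := by
  intro ε₀ hε₀
  have hunit : ∀ᵐ ξ ∂lam, ‖ξ‖ = 1 := measure_mono_null (fun _ h => by simpa using h) hsph
  have ht0 : ∀ᵐ ξ ∂lam, 0 ≤ inner ℝ Ginf ξ := ae_iff.2 (by simpa using hpos1)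
  have ht : ∀ᵐ ξ ∂lam, 0 ≤ inner ℝ Ginf ξ ∧ inner ℝ Ginf ξ ≤ (1 : ℝ) := by
    filter_upwards [hunit, ht0] with ξ hξ h0
    exact ⟨h0, (real_inner_le_norm _ _).trans (by rw [hGinf, hξ, one_mul])⟩
  obtain ⟨δ, hδ, hcomp⟩ := exists_pos_integral_comp_comparison lam
    (measurable_const.inner measurable_id') ht hpos2 hε₀
  refine ⟨δ, hδ, fun b hb x hx hGx => ?_⟩
  set u := ‖G x‖⁻¹ • G x
  have hGx0 : 0 < ‖G x‖ := norm_pos_iff.2 (hGne x hx)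
  have hinner (ξ) : inner ℝ (b • G x) ξ = b * ‖G x‖ * inner ℝ u ξ := by
    simp only [u, real_inner_smul_left]; field_simp
  have hGx_inner : ∀ᵐ ξ ∂lam, 0 ≤ inner ℝ (G x) ξ := ae_iff.2 (by simpa using hGpos x hx)
  have hu : ∀ᵐ ξ ∂lam, 0 ≤ inner ℝ u ξ ∧ |inner ℝ u ξ - inner ℝ Ginf ξ| ≤ δ := by
    filter_upwards [hunit, hGx_inner] with ξ hξ h0
    refine ⟨by simp only [u, real_inner_smul_left]; positivity, ?_⟩
    rw [← inner_sub_left]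
    exact (abs_real_inner_le_norm _ _).trans (by rwa [hξ, mul_one])
  simp_rw [hinner, ← radialExponent_mul_eq]
  exact hcomp _ ((hasLinQuadScaling_radialExponent hγ).comp_mul (by positivity)) _
    (measurable_const.inner measurable_id') hu
end

section
/- Let d ≥ 1. For each i = 1, …, d let q_i ≥ 0 and let ν_i be a Borel measure on (0, +∞) with ∫₀^∞ (v² ∧ v) ν_i(dv) < +∞, and define J_i(b) = (1/2)·q_i·b² + ∫₀^∞ (e^{−bv} − 1 + bv) ν_i(dv) for b ≥ 0. Assume each J_i is not identically zero and varies regularly at 0, i.e., there is α_i ∈ ℝ such that lim_{x→0+} J_i(b·x)/J_i(x) = b^{α_i} for every b > 0. Let G = (G_1, …, G_d) : [0, +∞) → [0, +∞)^d be continuous with G(0) = 0, and suppose there exist c ≥ 0 and a Borel measure μ on (0, +∞) with ∫₀^∞ (v ∧ v²) μ(dv) < +∞ such that Σ_{i=1}^d J_i(b·G_i(x)) = x·( c·b² + J_μ(b) ) for all b, x ≥ 0, where J_μ(b) = ∫₀^∞ (e^{−bv} − 1 + bv) μ(dv), and suppose c·b² + J_μ(b) is not identically zero. Then there exist an integer g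 with 1 ≤ g ≤ d, constants η_1, …, η_g > 0, and pairwise distinct exponents α'_1, …, α'_g ∈ (1, 2], each equal to one of the indices α_1, …, α_d, such that c·b² + J_μ(b) = Σ_{k=1}^g η_k·b^{α'_k} for all b ≥ 0. -/
/-!
Write `Φ(b) = c b² + J_μ(b)`. At `b = b₀` with `Φ(b₀) > 0`, the functional equation says that the
weights `J_i(b₀ G_i(x)) / (x Φ(b₀))` lie in the standard simplex, so along an ultrafilter finer
than `x → 0⁺` they converge to some `w`. Since `G_i(x) → 0`, regular variation turns
`J_i(b G_i(x)) / J_i(b₀ G_i(x))` into `(b / b₀)^{α_i}`, and dividing the equation at `b` by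
`x Φ(b₀)` gives `Φ(b) = Σ_i w_i' b^{α_i}` with `w_i' ≥ 0`. Because `Φ(b) = o(b)` as `b → 0⁺` and
`Φ(b) = O(b²)` as `b → ∞`, every exponent with positive weight lies in `(1, 2]`; collecting equal
exponents gives the representation.
-/

open Real Filter Set MeasureTheory Topology

lemma exp_neg_sub_one_add_nonneg (u : ℝ) : 0 ≤ exp (-u) - 1 + u := by
  linarith [add_one_le_exp (-u)]

lemma exp_neg_sub_one_add_le_min {u : ℝ} (hu : 0 ≤ u) : exp (-u) - 1 + u ≤ min u (u ^ 2) := by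
  have hlin : exp (-u) - 1 + u ≤ u := by linarith [exp_le_one_iff.mpr (neg_nonpos.mpr hu)]
  refine le_min hlin ?_
  rcases le_total u 1 with hu1 | hu1
  · have h := abs_exp_sub_one_sub_id_le (x := -u) (by rwa [abs_neg, abs_of_nonneg hu])
    rw [neg_sq] at h
    linarith [le_abs_self (exp (-u) - 1 - -u)]
  · nlinarith

noncomputable def laplaceExponent (ρ : Measure ℝ) (b : ℝ) : ℝ :=
  ∫ v in Ioi 0, (exp (-(b * v)) - 1 + b * v) ∂ρ

section laplaceExponent

variable {ρ : Measure ℝ}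

lemma integrableOn_min_sq_of_lintegral_lt_top
    (hρ : ∫⁻ v in Ioi 0, ENNReal.ofReal (min v (v ^ 2)) ∂ρ < ⊤) :
    IntegrableOn (fun v => min v (v ^ 2)) (Ioi 0) ρ :=
  (lintegral_ofReal_ne_top_iff_integrable (by fun_prop : Continuous _).aestronglyMeasurable
    ((ae_restrict_iff' measurableSet_Ioi).2 (.of_forall fun v (hv : 0 < v) => by positivity))).1
    hρ.ne

@[simp]
lemma laplaceExponent_zero : laplaceExponent ρ 0 = 0 := by
  simp [laplaceExponent]

lemma laplaceExponent_nonneg (b : ℝ) : 0 ≤ laplaceExponent ρ b :=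
  setIntegral_nonneg measurableSet_Ioi fun _ _ => exp_neg_sub_one_add_nonneg _

lemma laplaceExponent_le (hρ : IntegrableOn (fun v => min v (v ^ 2)) (Ioi 0) ρ) {b : ℝ}
    (hb : 1 ≤ b) :
    laplaceExponent ρ b ≤ b ^ 2 * ∫ v in Ioi 0, min v (v ^ 2) ∂ρ := by
  rw [← integral_const_mul]
  refine integral_mono_of_nonneg (.of_forall fun v => exp_neg_sub_one_add_nonneg _)
    (hρ.const_mul _) ((ae_restrict_iff' measurableSet_Ioi).mpr (.of_forall fun v hv => ?_))
  have hv : 0 < v := hv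
  calc exp (-(b * v)) - 1 + b * v ≤ min (b * v) ((b * v) ^ 2) :=
        exp_neg_sub_one_add_le_min (by positivity)
    _ ≤ b ^ 2 * min v (v ^ 2) := by
        rw [mul_min_of_nonneg _ _ (by positivity)]
        have hb2 : b ≤ b ^ 2 := by nlinarith
        exact min_le_min (by nlinarith [mul_le_mul_of_nonneg_right hb2 hv.le]) (by nlinarith)

lemma tendsto_laplaceExponent_div (hρ : IntegrableOn (fun v => min v (v ^ 2)) (Ioi 0) ρ) :
    Tendsto (fun b => laplaceExponent ρ b / b) (𝓝[>] 0) (𝓝 0) := by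
  have hbound : ∀ {b v : ℝ}, 0 < b → 0 < v →
      (exp (-(b * v)) - 1 + b * v) / b ≤ min v (b * v ^ 2) := fun {b v} hb hv => by
    rw [div_le_iff₀ hb, min_mul_of_nonneg _ _ hb.le]
    exact (exp_neg_sub_one_add_le_min (mul_pos hb hv).le).trans_eq (by ring_nf)
  have key := tendsto_integral_filter_of_dominated_convergence (μ := ρ.restrict (Ioi 0))
    (l := 𝓝[>] (0 : ℝ)) (F := fun b v => (exp (-(b * v)) - 1 + b * v) / b) (f := fun _ => 0)
    _ (.of_forall fun b => (by fun_prop : Continuous _).aestronglyMeasurable) ?_ hρ ?_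
  · simpa [laplaceExponent, integral_div] using key
  · filter_upwards [Ioo_mem_nhdsGT one_pos] with b hb
    refine (ae_restrict_iff' measurableSet_Ioi).mpr (.of_forall fun v (hv : 0 < v) => ?_)
    rw [norm_of_nonneg (div_nonneg (exp_neg_sub_one_add_nonneg _) hb.1.le)]
    exact (hbound hb.1 hv).trans (min_le_min le_rfl (by nlinarith [hb.2]))
  · refine (ae_restrict_iff' measurableSet_Ioi).mpr (.of_forall fun v (hv : 0 < v) => ?_)
    have hlin : Tendsto (fun b : ℝ => b * v ^ 2) (𝓝[>] 0) (𝓝 0) := by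
      simpa using ((continuous_mul_const (v ^ 2)).tendsto 0).mono_left nhdsWithin_le_nhds
    refine tendsto_of_tendsto_of_tendsto_of_le_of_le' tendsto_const_nhds hlin ?_ ?_
    all_goals filter_upwards [self_mem_nhdsWithin] with b (hb : 0 < b)
    · exact div_nonneg (exp_neg_sub_one_add_nonneg _) hb.le
    · exact (hbound hb hv).trans (min_le_right _ _)

lemma tendsto_sq_add_laplaceExponent_div (c : ℝ)
    (hρ : IntegrableOn (fun v => min v (v ^ 2)) (Ioi 0) ρ) :
    Tendsto (fun b => (c * b ^ 2 + laplaceExponent ρ b) / b) (𝓝[>] 0) (𝓝 0) := by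
  have hc : Tendsto (fun b : ℝ => c * b) (𝓝[>] 0) (𝓝 0) := by
    simpa using ((continuous_const_mul c).tendsto 0).mono_left nhdsWithin_le_nhds
  have hsum := hc.add (tendsto_laplaceExponent_div hρ)
  rw [add_zero] at hsum
  refine hsum.congr' ?_
  filter_upwards [self_mem_nhdsWithin] with b (hb : 0 < b)
  field_simp

lemma sq_add_laplaceExponent_le (c : ℝ) (hρ : IntegrableOn (fun v => min v (v ^ 2)) (Ioi 0) ρ)
    {b : ℝ} (hb : 1 ≤ b) :
    c * b ^ 2 + laplaceExponent ρ b ≤ (c + ∫ v in Ioi 0, min v (v ^ 2) ∂ρ) * b ^ 2 := by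
  linarith [laplaceExponent_le hρ hb]

lemma exists_pos_sq_add_laplaceExponent_pos {c : ℝ} (hc : 0 ≤ c)
    (h : ∃ b ≥ 0, c * b ^ 2 + laplaceExponent ρ b ≠ 0) :
    ∃ b > 0, 0 < c * b ^ 2 + laplaceExponent ρ b := by
  obtain ⟨b, hb, hne⟩ := h
  refine ⟨b, hb.lt_of_ne ?_, (add_nonneg (by positivity) (laplaceExponent_nonneg b)).lt_of_ne' hne⟩
  rintro rfl
  simp at hne

end laplaceExponent

lemma tendsto_const_mul_nhdsGT_zero {c : ℝ} (hc : 0 < c) :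
    Tendsto (fun x => c * x) (𝓝[>] 0) (𝓝[>] 0) :=
  tendsto_nhdsWithin_of_tendsto_nhds_of_eventually_within _
    (by simpa using ((continuous_const_mul c).tendsto 0).mono_left nhdsWithin_le_nhds)
    (by filter_upwards [self_mem_nhdsWithin] with x (hx : 0 < x) using mul_pos hc hx)

lemma ContinuousOn.tendsto_nhdsGT_nhdsGE {f : ℝ → ℝ} (hf : ContinuousOn f (Ici 0)) (hf0 : f 0 = 0)
    (hf_nonneg : ∀ x ≥ 0, 0 ≤ f x) : Tendsto f (𝓝[>] 0) (𝓝[≥] 0) := by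
  refine tendsto_nhdsWithin_iff.2
    ⟨?_, eventually_nhdsWithin_of_forall fun x (hx : 0 < x) => hf_nonneg x hx.le⟩
  have h := (hf.continuousWithinAt self_mem_Ici).tendsto
  rw [hf0] at h
  exact h.mono_left (nhdsWithin_mono _ Ioi_subset_Ici_self)

def RegularlyVaryingAtZero (f : ℝ → ℝ) (α : ℝ) : Prop :=
  ∀ b > 0, Tendsto (fun x => f (b * x) / f x) (𝓝[>] 0) (𝓝 (b ^ α))

namespace RegularlyVaryingAtZero

variable {f : ℝ → ℝ} {α : ℝ}

/-- With `f x / f x = 0` whenever `f x = 0`, the limit `1` at `b = 1` forces `f ≠ 0` near `0`. -/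
lemma eventually_ne_zero (hf : RegularlyVaryingAtZero f α) : ∀ᶠ x in 𝓝[>] 0, f x ≠ 0 := by
  have h := hf 1 one_pos
  rw [one_rpow] at h
  filter_upwards [h.eventually_ne one_ne_zero] with x hx hfx
  simp [hfx] at hx

lemma tendsto_div_comp_mul (hf : RegularlyVaryingAtZero f α) {b b₀ : ℝ} (hb : 0 < b)
    (hb₀ : 0 < b₀) :
    Tendsto (fun x => f (b * x) / f (b₀ * x)) (𝓝[>] 0) (𝓝 ((b / b₀) ^ α)) := by
  refine ((hf _ (div_pos hb hb₀)).comp (tendsto_const_mul_nhdsGT_zero hb₀)).congr fun x => ?_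
  simp only [Function.comp_apply]
  rw [← mul_assoc, div_mul_cancel₀ _ hb₀.ne']

lemma tendsto_div_of_tendsto_div (hf : RegularlyVaryingAtZero f α) (hf0 : f 0 = 0)
    {X : Type*} {l : Filter X} {y s : X → ℝ} (hy : Tendsto y l (𝓝[≥] 0)) {b b₀ w : ℝ}
    (hb : 0 < b) (hb₀ : 0 < b₀) (hw : Tendsto (fun x => f (b₀ * y x) / s x) l (𝓝 w)) :
    Tendsto (fun x => f (b * y x) / s x) l (𝓝 (w * (b / b₀) ^ α)) := by
  set r : ℝ → ℝ := fun t => if 0 < t then f (b * t) / f (b₀ * t) else (b / b₀) ^ α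
  have hr : Tendsto r (𝓝[≥] 0) (𝓝 ((b / b₀) ^ α)) := by
    rw [← Ioi_insert, nhdsWithin_insert, tendsto_sup]
    refine ⟨by simpa [r] using tendsto_pure_nhds r 0,
      (hf.tendsto_div_comp_mul hb hb₀).congr' ?_⟩
    filter_upwards [self_mem_nhdsWithin] with t (ht : 0 < t) using by simp [r, ht]
  have hne : ∀ᶠ t in 𝓝[≥] (0 : ℝ), 0 < t → f (b₀ * t) ≠ 0 := by
    have h := (tendsto_const_mul_nhdsGT_zero hb₀).eventually hf.eventually_ne_zero
    exact nhdsWithin_le_nhds (eventually_nhdsWithin_iff.mp h)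
  refine (hw.mul (hr.comp hy)).congr' ?_
  filter_upwards [hy.eventually hne, hy.eventually self_mem_nhdsWithin] with x hx (hx0 : 0 ≤ y x)
  rcases hx0.eq_or_lt with h0 | hpos
  · simp [← h0, hf0]
  · simp only [Function.comp_apply, r, if_pos hpos]
    rw [div_mul_div_comm, mul_comm (s x), mul_div_mul_left _ _ (hx hpos)]

end RegularlyVaryingAtZero

theorem exists_nonneg_weights_of_sum_eq {ι : Type*} [Fintype ι] {f : ι → ℝ → ℝ} {α : ι → ℝ}
    (hf : ∀ i, RegularlyVaryingAtZero (f i) (α i)) (hf0 : ∀ i, f i 0 = 0)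
    (hf_nonneg : ∀ i, ∀ t ≥ 0, 0 ≤ f i t) {y : ι → ℝ → ℝ}
    (hy : ∀ i, Tendsto (y i) (𝓝[>] 0) (𝓝[≥] 0)) {Φ : ℝ → ℝ}
    (heq : ∀ b > 0, ∀ x > 0, ∑ i, f i (b * y i x) = x * Φ b) {b₀ : ℝ} (hb₀ : 0 < b₀)
    (hΦb₀ : 0 < Φ b₀) :
    ∃ w : ι → ℝ, (∀ i, 0 ≤ w i) ∧ ∀ b > 0, Φ b = ∑ i, w i * b ^ α i := by
  set u : ℝ → ι → ℝ := fun x i => f i (b₀ * y i x) / (x * Φ b₀)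
  have hu : ∀ᶠ x in 𝓝[>] 0, u x ∈ stdSimplex ℝ ι := by
    filter_upwards [self_mem_nhdsWithin,
      eventually_all.2 fun i => (hy i).eventually self_mem_nhdsWithin] with x (hx : 0 < x) hyx
    refine ⟨fun i => div_nonneg (hf_nonneg i _ (mul_nonneg hb₀.le (hyx i))) (by positivity), ?_⟩
    simp only [u, ← Finset.sum_div, heq b₀ hb₀ x hx, div_self (by positivity : x * Φ b₀ ≠ 0)]
  set U := Ultrafilter.of (𝓝[>] (0 : ℝ))
  have hU : ↑U ≤ 𝓝[>] (0 : ℝ) := Ultrafilter.of_le _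
  obtain ⟨w, hw, hwU⟩ := (isCompact_stdSimplex ℝ ι).ultrafilter_le_nhds (U.map u)
    (by rw [Ultrafilter.coe_map, le_principal_iff]; exact hU hu)
  refine ⟨fun i => Φ b₀ * w i / b₀ ^ α i, fun i => by have := hw.1 i; positivity, fun b hb => ?_⟩
  have hlim : Tendsto (fun x => ∑ i, f i (b * y i x) / (x * Φ b₀)) U
      (𝓝 (∑ i, w i * (b / b₀) ^ α i)) :=
    tendsto_finsetSum _ fun i _ => (hf i).tendsto_div_of_tendsto_div (hf0 i)
      ((hy i).mono_left hU) hb hb₀ (tendsto_pi_nhds.1 hwU i)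
  have hconst : ∀ᶠ x in U, ∑ i, f i (b * y i x) / (x * Φ b₀) = Φ b / Φ b₀ := by
    filter_upwards [hU self_mem_nhdsWithin] with x (hx : 0 < x)
    rw [← Finset.sum_div, heq b hb x hx, mul_div_mul_left _ _ hx.ne']
  have hratio := tendsto_nhds_unique (tendsto_const_nhds.congr' (EventuallyEq.symm hconst)) hlim
  rw [div_eq_iff hΦb₀.ne', Finset.sum_mul] at hratio
  rw [hratio]
  refine Finset.sum_congr rfl fun i _ => ?_
  rw [div_rpow hb.le hb₀.le]
  have : b₀ ^ α i ≠ 0 := (rpow_pos_of_pos hb₀ _).ne'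
  field_simp

section exponents

variable {Φ : ℝ → ℝ} {w α : ℝ}

lemma one_lt_of_mul_rpow_le (hw : 0 < w) (hle : ∀ b > 0, w * b ^ α ≤ Φ b)
    (hΦ : Tendsto (fun b => Φ b / b) (𝓝[>] 0) (𝓝 0)) : 1 < α := by
  by_contra! hα
  obtain ⟨b, hbw, hb⟩ := ((hΦ.eventually (gt_mem_nhds hw)).and (Ioo_mem_nhdsGT one_pos)).exists
  have hpow : b ≤ b ^ α := by
    simpa using rpow_le_rpow_of_exponent_ge hb.1 hb.2.le hα
  rw [div_lt_iff₀ hb.1] at hbw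
  nlinarith [hle b hb.1]

lemma le_two_of_mul_rpow_le {C : ℝ} (hw : 0 < w) (hle : ∀ b > 0, w * b ^ α ≤ Φ b)
    (hΦ : ∀ b ≥ 1, Φ b ≤ C * b ^ 2) : α ≤ 2 := by
  by_contra! hα
  obtain ⟨b, hbC, hb⟩ := (((tendsto_rpow_atTop (sub_pos.2 hα)).eventually_gt_atTop (C / w)).and
    (eventually_ge_atTop 1)).exists
  have hb0 : 0 < b := by linarith
  have h := (hle b hb0).trans (hΦ b hb)
  rw [← rpow_natCast, show α = (α - 2) + (2 : ℕ) by push_cast; ring, rpow_add hb0,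
    ← mul_assoc] at h
  rw [div_lt_iff₀ hw] at hbC
  nlinarith [rpow_pos_of_pos hb0 ((2 : ℕ) : ℝ)]

lemma mem_Ioc_of_eq_sum_mul_rpow {ι : Type*} [Fintype ι] {C : ℝ} {w α : ι → ℝ}
    (hw : ∀ i, 0 ≤ w i) (hrep : ∀ b > 0, Φ b = ∑ i, w i * b ^ α i)
    (hΦ₀ : Tendsto (fun b => Φ b / b) (𝓝[>] 0) (𝓝 0)) (hΦ₁ : ∀ b ≥ 1, Φ b ≤ C * b ^ 2) {i : ι}
    (hi : 0 < w i) : α i ∈ Ioc 1 2 := by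
  have hle : ∀ b > 0, w i * b ^ α i ≤ Φ b := fun b hb => (hrep b hb) ▸
    Finset.single_le_sum (fun j _ => mul_nonneg (hw j) (rpow_nonneg hb.le _)) (Finset.mem_univ i)
  exact ⟨one_lt_of_mul_rpow_le hi hle hΦ₀, le_two_of_mul_rpow_le hi hle hΦ₁⟩

end exponents

theorem exists_injective_sum_mul_eq {ι β : Type*} [Fintype ι] [DecidableEq β] (w : ι → ℝ)
    (α : ι → β) (hw : ∀ i, 0 ≤ w i) :
    ∃ g ≤ Fintype.card ι, ∃ (η : Fin g → ℝ) (α' : Fin g → β), (∀ k, 0 < η k) ∧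
      Function.Injective α' ∧ (∀ k, ∃ i, 0 < w i ∧ α' k = α i) ∧
      ∀ F : β → ℝ, ∑ i, w i * F (α i) = ∑ k, η k * F (α' k) := by
  set s := Finset.univ.filter fun i => 0 < w i
  set A := s.image α
  set e := A.equivFin
  set η : β → ℝ := fun a => ∑ i ∈ s with α i = a, w i
  refine ⟨A.card, Finset.card_image_le.trans (Finset.card_le_univ s), fun k => η (e.symm k),
    fun k => e.symm k, fun k => ?_, Subtype.val_injective.comp e.symm.injective, fun k => ?_,
    fun F => ?_⟩
  · obtain ⟨i, hi, hαi⟩ := Finset.mem_image.1 (e.symm k).2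
    exact Finset.sum_pos (fun j hj => (Finset.mem_filter.1 (Finset.mem_filter.1 hj).1).2)
      ⟨i, Finset.mem_filter.2 ⟨hi, hαi⟩⟩
  · obtain ⟨i, hi, hαi⟩ := Finset.mem_image.1 (e.symm k).2
    exact ⟨i, (Finset.mem_filter.1 hi).2, hαi.symm⟩
  · calc ∑ i, w i * F (α i) = ∑ i ∈ s, w i * F (α i) := by
          refine (Finset.sum_filter_of_ne fun i _ h => (hw i).lt_of_ne fun h0 => ?_).symm
          exact h (by rw [← h0, zero_mul])
      _ = ∑ a ∈ A, η a * F a := by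
          rw [← Finset.sum_fiberwise_of_maps_to fun i hi => Finset.mem_image_of_mem α hi]
          refine Finset.sum_congr rfl fun a _ => ?_
          rw [Finset.sum_mul]
          exact Finset.sum_congr rfl fun i hi => by rw [(Finset.mem_filter.1 hi).2]
      _ = ∑ k, η (e.symm k) * F (e.symm k) := by
          rw [← Finset.sum_coe_sort A, e.symm.sum_comp (fun a : A => η a * F a)]

theorem stmt8_general (d : ℕ)
    (q : Fin d → ℝ) (hq : ∀ i, 0 ≤ q i)
    (ν : Fin d → Measure ℝ)
    (J : Fin d → ℝ → ℝ)
    (hJ : ∀ i, ∀ b ≥ (0:ℝ), J i b =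
      (1/2) * q i * b ^ 2
        + ∫ v in Set.Ioi (0:ℝ), (Real.exp (-(b * v)) - 1 + b * v) ∂(ν i))
    (α : Fin d → ℝ)
    (hreg : ∀ i, ∀ b > (0:ℝ),
      Tendsto (fun x => J i (b * x) / J i x) (nhdsWithin 0 (Set.Ioi 0))
        (nhds (b ^ α i)))
    (G : Fin d → ℝ → ℝ)
    (hGcont : ∀ i, ContinuousOn (G i) (Set.Ici 0))
    (hGnn : ∀ i, ∀ x ≥ (0:ℝ), 0 ≤ G i x)
    (hG0 : ∀ i, G i 0 = 0)
    (c : ℝ) (hc : 0 ≤ c)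
    (μ : Measure ℝ)
    (hμ : ∫⁻ v in Set.Ioi (0:ℝ), ENNReal.ofReal (min v (v ^ 2)) ∂μ < ⊤)
    (Jμ : ℝ → ℝ)
    (hJμ : ∀ b ≥ (0:ℝ), Jμ b = ∫ v in Set.Ioi (0:ℝ), (Real.exp (-(b * v)) - 1 + b * v) ∂μ)
    (heq : ∀ b ≥ (0:ℝ), ∀ x ≥ (0:ℝ), (∑ i, J i (b * G i x)) = x * (c * b ^ 2 + Jμ b))
    (hne : ∃ b ≥ (0:ℝ), c * b ^ 2 + Jμ b ≠ 0) :
    ∃ g : ℕ, 1 ≤ g ∧ g ≤ d ∧ ∃ η : Fin g → ℝ, ∃ α' : Fin g → ℝ,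
      (∀ k, 0 < η k) ∧ (∀ k, α' k ∈ Set.Ioc (1:ℝ) 2) ∧ Function.Injective α' ∧
      (∀ k, ∃ i, α' k = α i) ∧
      ∀ b ≥ (0:ℝ), c * b ^ 2 + Jμ b = ∑ k, η k * b ^ α' k := by
  set Φ : ℝ → ℝ := fun b => c * b ^ 2 + laplaceExponent μ b
  have hΦ : ∀ b ≥ 0, c * b ^ 2 + Jμ b = Φ b := fun b hb => by rw [hJμ b hb]; rfl
  have hμ' := integrableOn_min_sq_of_lintegral_lt_top hμ
  obtain ⟨b₀, hb₀, hΦb₀⟩ : ∃ b₀ > 0, 0 < Φ b₀ :=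
    let ⟨b, hb, hb_ne⟩ := hne
    exists_pos_sq_add_laplaceExponent_pos hc ⟨b, hb, (hΦ b hb).symm.trans_ne hb_ne⟩
  have hJ_nonneg : ∀ i, ∀ t ≥ 0, 0 ≤ J i t := fun i t ht => by
    rw [hJ i t ht]
    exact add_nonneg (by have := hq i; positivity) (laplaceExponent_nonneg t)
  obtain ⟨w, hw, hrep⟩ := exists_nonneg_weights_of_sum_eq (Φ := Φ) hreg
    (fun i => by simp [hJ i 0 le_rfl]) hJ_nonneg
    (fun i => (hGcont i).tendsto_nhdsGT_nhdsGE (hG0 i) (hGnn i))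
    (fun b hb x hx => (heq b hb.le x hx.le).trans (by rw [hΦ b hb.le])) hb₀ hΦb₀
  obtain ⟨g, hg, η, α', hη, hinj, hα', hsum⟩ := exists_injective_sum_mul_eq w α hw
  have hrep' : ∀ b > 0, Φ b = ∑ k, η k * b ^ α' k := fun b hb =>
    (hrep b hb).trans (hsum fun a => b ^ a)
  have hα'_mem : ∀ k, α' k ∈ Ioc 1 2 := fun k => by
    obtain ⟨i, hi, h⟩ := hα' k
    exact h ▸ mem_Ioc_of_eq_sum_mul_rpow hw hrep (tendsto_sq_add_laplaceExponent_div c hμ')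
      (fun b hb => sq_add_laplaceExponent_le c hμ' hb) hi
  refine ⟨g, Nat.one_le_iff_ne_zero.2 ?_, by simpa using hg, η, α', hη, hα'_mem, hinj,
    fun k => ?_, fun b hb => ?_⟩
  · rintro rfl
    simp [hrep' b₀ hb₀] at hΦb₀
  · obtain ⟨i, -, h⟩ := hα' k
    exact ⟨i, h⟩
  · rw [hΦ b hb]
    rcases hb.eq_or_lt with rfl | hb
    · simp [Φ, fun k => zero_rpow (zero_lt_one.trans (hα'_mem k).1).ne']
    · exact hrep' b hb

/-- Theorem (noise with independent coordinates): if each Laplace exponent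
`J_i(b) = (1/2)q_i b² + ∫ (e^{−bv} − 1 + bv) ν_i(dv)` is nonzero and varies regularly
at `0` with index `α_i`, `G` is continuous, nonnegative, `G(0) = 0`, and
`Σ_i J_i(b·G_i(x)) = x·(c·b² + J_μ(b))` for all `b, x ≥ 0` with the right side not
identically zero, then `c·b² + J_μ(b) = Σ_{k=1}^g η_k b^{α'_k}` with `1 ≤ g ≤ d`,
`η_k > 0` and pairwise distinct `α'_k ∈ (1,2]`, each among the indices `α_i`. -/
theorem stmt8 (d : ℕ) (hd : 1 ≤ d)
    (q : Fin d → ℝ) (hq : ∀ i, 0 ≤ q i)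
    (ν : Fin d → Measure ℝ)
    (hν : ∀ i, ∫⁻ v in Set.Ioi (0:ℝ), ENNReal.ofReal (min (v ^ 2) v) ∂(ν i) < ⊤)
    (J : Fin d → ℝ → ℝ)
    (hJ : ∀ i, ∀ b ≥ (0:ℝ), J i b =
      (1/2) * q i * b ^ 2
        + ∫ v in Set.Ioi (0:ℝ), (Real.exp (-(b * v)) - 1 + b * v) ∂(ν i))
    (hJne : ∀ i, ∃ b ≥ (0:ℝ), J i b ≠ 0)
    (α : Fin d → ℝ)
    (hreg : ∀ i, ∀ b > (0:ℝ),
      Tendsto (fun x => J i (b * x) / J i x) (nhdsWithin 0 (Set.Ioi 0))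
        (nhds (b ^ α i)))
    (G : Fin d → ℝ → ℝ)
    (hGcont : ∀ i, ContinuousOn (G i) (Set.Ici 0))
    (hGnn : ∀ i, ∀ x ≥ (0:ℝ), 0 ≤ G i x)
    (hG0 : ∀ i, G i 0 = 0)
    (c : ℝ) (hc : 0 ≤ c)
    (μ : Measure ℝ)
    (hμ : ∫⁻ v in Set.Ioi (0:ℝ), ENNReal.ofReal (min v (v ^ 2)) ∂μ < ⊤)
    (Jμ : ℝ → ℝ)
    (hJμ : ∀ b ≥ (0:ℝ), Jμ b = ∫ v in Set.Ioi (0:ℝ), (Real.exp (-(b * v)) - 1 + b * v) ∂μ)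
    (heq : ∀ b ≥ (0:ℝ), ∀ x ≥ (0:ℝ), (∑ i, J i (b * G i x)) = x * (c * b ^ 2 + Jμ b))
    (hne : ∃ b ≥ (0:ℝ), c * b ^ 2 + Jμ b ≠ 0) :
    ∃ g : ℕ, 1 ≤ g ∧ g ≤ d ∧ ∃ η : Fin g → ℝ, ∃ α' : Fin g → ℝ,
      (∀ k, 0 < η k) ∧ (∀ k, α' k ∈ Set.Ioc (1:ℝ) 2) ∧ Function.Injective α' ∧
      (∀ k, ∃ i, α' k = α i) ∧
      ∀ b ≥ (0:ℝ), c * b ^ 2 + Jμ b = ∑ k, η k * b ^ α' k :=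
  stmt8_general d q hq ν J hJ α hreg G hGcont hGnn hG0 c hc μ hμ Jμ hJμ heq hne
end

section
/- Let 2 ≥ α₁ ≥ α₂ > 1. For i = 1, 2 let q_i ≥ 0 and ν_i a Borel measure on (0, +∞) with ∫₀^∞ (v² ∧ v) ν_i(dv) < +∞, set J_i(b) = (1/2)q_i b² + ∫₀^∞ (e^{−bv} − 1 + bv) ν_i(dv), and assume J_i is not identically zero and varies regularly at 0 with index α_i, and that either q_i > 0 or ∫₀^1 v ν_i(dv) = +∞ (infinite variation). Let G₁, G₂ : [0, +∞) → [0, +∞) be continuous with G₁(x) > 0, G₂(x) > 0 for x > 0 and with G₂/G₁ continuously differentiable on (0, +∞), and let η₁ > 0. Then the identity J₁(b·G₁(x)) + J₂(b·G₂(x)) = η₁·x·b^{α₁} holds for all b, x ≥ 0 if and only if one of the following holds: (a) there exist constants c₀, g₁, g₂ > 0 such that G₁(x) = c₀·g₁·x^{1/α₁} and G₂(x) = c₀·g₂·x^{1/α₁} for all x ≥ 0, and J₁(g₁·b) + J₂(g₂·b) = (η₁/c₀^{α₁})·b^{α₁} for all b ≥ 0; (b) there exist constants c₁, c₂ > 0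 such that J₁(b) = c₁·b^{α₁} and J₂(b) = c₂·b^{α₁} for all b ≥ 0, and c₁·G₁(x)^{α₁} + c₂·G₂(x)^{α₁} = η₁·x for all x ≥ 0. -/
/-!
Dividing the generating equation by `G₁(x)^{α₁}` gives, for every `x > 0`,
`J₁(s) + J₂(r(x) s) = K(x) s^{α₁}` with `r = G₂/G₁` and `K(x) = η₁ x / G₁(x)^{α₁}`.
If `r` is constant, then so is `K`, which pins down `G₁(x)^{α₁}` as a multiple of `x`: case (a).
Otherwise, comparing two values `r(u) > r(v)` yields `J₂(L t) - J₂(t) = E t^{α₁}` with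
`L = r(u)/r(v) > 1`. Then `J₂(t) - c t^{α₁}` is invariant under `t ↦ L t` for a suitable `c`;
if it were a nonzero constant `d`, then `J₂(L t)/J₂(t) → d/d = 1` along `t = t₀ L^{-n}`,
contradicting regular variation with positive index. So `J₂` is `α₁`-stable, hence so is `J₁`:
case (b).
-/

open Real Filter Set MeasureTheory Topology

lemma laplaceExponent_nonneg_s12 {q : ℝ} (hq : 0 ≤ q) (ν : Measure ℝ) (b : ℝ) :
    0 ≤ 1 / 2 * q * b ^ 2 + ∫ v in Ioi (0 : ℝ), (exp (-(b * v)) - 1 + b * v) ∂ν := by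
  refine add_nonneg (by positivity) (integral_nonneg fun v => ?_)
  show 0 ≤ exp (-(b * v)) - 1 + b * v
  linarith [add_one_le_exp (-(b * v))]

lemma pos_of_eq_const_mul_rpow {J : ℝ → ℝ} {c α : ℝ} (hJ : ∀ b ≥ 0, J b = c * b ^ α)
    (hnn : ∀ b ≥ 0, 0 ≤ J b) (hne : ∃ b ≥ 0, J b ≠ 0) : 0 < c := by
  have hc : 0 ≤ c := by simpa [hJ 1 zero_le_one] using hnn 1 zero_le_one
  refine hc.lt_of_ne fun h => ?_
  obtain ⟨b, hb, hJb⟩ := hne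
  exact hJb (by rw [hJ b hb, ← h, zero_mul])

lemma tendsto_div_pow_nhdsGT_zero {t L : ℝ} (ht : 0 < t) (hL : 1 < L) :
    Tendsto (fun n : ℕ => t / L ^ n) atTop (𝓝[>] 0) :=
  tendsto_nhdsWithin_iff.2
    ⟨tendsto_const_nhds.div_atTop (tendsto_pow_atTop_atTop_of_one_lt hL),
      Eventually.of_forall fun n => div_pos ht (pow_pos (by linarith) n)⟩

theorem eq_div_mul_rpow_of_sub_eq {J : ℝ → ℝ} {α ℓ L E : ℝ} (hα : 0 < α) (hL : 1 < L)
    (hℓ : ℓ ≠ 1) (hlim : Tendsto (fun x => J (L * x) / J x) (𝓝[>] 0) (𝓝 ℓ))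
    (hfe : ∀ t > 0, J (L * t) - J t = E * t ^ α) {t : ℝ} (ht : 0 < t) :
    J t = E / (L ^ α - 1) * t ^ α := by
  set c := E / (L ^ α - 1)
  have hcE : c * (L ^ α - 1) = E := div_mul_cancel₀ E (sub_pos.2 (one_lt_rpow hL hα)).ne'
  have hinv : ∀ s > 0, J (L * s) - c * (L * s) ^ α = J s - c * s ^ α := by
    intro s hs
    rw [mul_rpow (by linarith) hs.le]
    linear_combination hfe s hs - s ^ α * hcE
  set d := J t - c * t ^ α
  set x : ℕ → ℝ := fun n => t / L ^ n
  have hx : Tendsto x atTop (𝓝[>] 0) := tendsto_div_pow_nhdsGT_zero ht hL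
  have hxpos : ∀ n, 0 < x n := fun n => div_pos ht (pow_pos (by linarith) n)
  have hxα : Tendsto (fun n => x n ^ α) atTop (𝓝 0) := by
    simpa [Function.comp_def, zero_rpow hα.ne'] using
      ((continuousAt_rpow_const 0 α (Or.inr hα.le)).tendsto.comp
        (tendsto_nhds_of_tendsto_nhdsWithin hx))
  have hJx : ∀ n, J (x n) = c * x n ^ α + d := by
    intro n
    induction n with
    | zero => simp [x, d]
    | succ n ih =>
      have hstep : L * x (n + 1) = x n := by
        simp only [x, pow_succ]
        field_simp
      have hinvn := hinv (x (n + 1)) (hxpos _)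
      rw [hstep] at hinvn
      linarith
  have hden : Tendsto (fun n => J (x n)) atTop (𝓝 d) := by
    simpa [hJx] using (hxα.const_mul c).add_const d
  have hnum : Tendsto (fun n => J (L * x n)) atTop (𝓝 d) := by
    simpa [eq_add_of_sub_eq (hfe _ (hxpos _))] using (hxα.const_mul E).add hden
  by_contra hne
  have hd : d ≠ 0 := sub_ne_zero.2 hne
  refine hℓ (tendsto_nhds_unique (hlim.comp hx) ?_)
  have hratio := hnum.div hden hd
  rwa [div_self hd] at hratio

def GeneratingEquation (J₁ J₂ G₁ G₂ : ℝ → ℝ) (η α : ℝ) : Prop :=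
  ∀ b ≥ (0 : ℝ), ∀ x ≥ (0 : ℝ), J₁ (b * G₁ x) + J₂ (b * G₂ x) = η * x * b ^ α

namespace GeneratingEquation

variable {J₁ J₂ G₁ G₂ : ℝ → ℝ} {η α : ℝ}

lemma swap (H : GeneratingEquation J₁ J₂ G₁ G₂ η α) : GeneratingEquation J₂ J₁ G₂ G₁ η α :=
  fun b hb x hx => by rw [add_comm]; exact H b hb x hx

lemma fst_zero (H : GeneratingEquation J₁ J₂ G₁ G₂ η α) (hJ₁nn : ∀ b ≥ 0, 0 ≤ J₁ b)
    (hJ₂nn : ∀ b ≥ 0, 0 ≤ J₂ b) (hJ₁ne : ∃ b ≥ 0, J₁ b ≠ 0) (hG₁ : 0 ≤ G₁ 0)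
    (hG₂ : 0 ≤ G₂ 0) : G₁ 0 = 0 := by
  refine hG₁.eq_or_lt'.resolve_right fun hpos => ?_
  obtain ⟨b, hb, hJb⟩ := hJ₁ne
  have hb' : 0 ≤ b / G₁ 0 := div_nonneg hb hpos.le
  have H0 := H (b / G₁ 0) hb' 0 le_rfl
  rw [div_mul_cancel₀ b hpos.ne', mul_zero, zero_mul] at H0
  have := hJ₂nn _ (mul_nonneg hb' hG₂)
  exact hJb (by linarith [hJ₁nn b hb])

/-- The generating equation at `b = s / G₁ x`. -/
lemma normalized (H : GeneratingEquation J₁ J₂ G₁ G₂ η α) {x : ℝ} (hx : 0 < x)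
    (hG₁ : 0 < G₁ x) {s : ℝ} (hs : 0 ≤ s) :
    J₁ s + J₂ (G₂ x / G₁ x * s) = η * x / G₁ x ^ α * s ^ α := by
  have H' := H (s / G₁ x) (div_nonneg hs hG₁.le) x hx.le
  rw [div_mul_cancel₀ s hG₁.ne', div_rpow hs hG₁.le] at H'
  rw [show G₂ x / G₁ x * s = s / G₁ x * G₂ x by ring, H']
  ring

lemma G_eq_mul_rpow_of_ratio_const (H : GeneratingEquation J₁ J₂ G₁ G₂ η α) (hη : 0 < η)
    (hα : 0 < α) (hG₁0 : G₁ 0 = 0) (hG₂0 : G₂ 0 = 0) (hG₁ : ∀ x > 0, 0 < G₁ x)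
    (hG₂ : ∀ x > 0, 0 < G₂ x) (hr : ∀ x > 0, G₂ x / G₁ x = G₂ 1 / G₁ 1) :
    ∃ c₀ > (0 : ℝ), ∃ g₁ > (0 : ℝ), ∃ g₂ > (0 : ℝ),
      (∀ x ≥ (0 : ℝ), G₁ x = c₀ * g₁ * x ^ (1 / α) ∧ G₂ x = c₀ * g₂ * x ^ (1 / α)) ∧
      (∀ b ≥ (0 : ℝ), J₁ (g₁ * b) + J₂ (g₂ * b) = (η / c₀ ^ α) * b ^ α) := by
  have hG₁1 := hG₁ 1 one_pos
  have hK : ∀ x > 0, η * x / G₁ x ^ α = η / G₁ 1 ^ α := fun x hx => by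
    have Hx := H.normalized hx (hG₁ x hx) zero_le_one
    rw [hr x hx] at Hx
    simpa using Hx.symm.trans (H.normalized one_pos hG₁1 zero_le_one)
  have hG₁x : ∀ x ≥ 0, G₁ x = G₁ 1 * x ^ (1 / α) := by
    intro x hx
    rcases hx.eq_or_lt' with rfl | hx
    · rw [hG₁0, zero_rpow (one_div_ne_zero hα.ne'), mul_zero]
    have hGα : G₁ x ^ α = G₁ 1 ^ α * x := by
      have := hK x hx
      rw [div_eq_div_iff (rpow_pos_of_pos (hG₁ x hx) α).ne' (rpow_pos_of_pos hG₁1 α).ne'] at this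
      exact mul_left_cancel₀ hη.ne' (by linear_combination -this)
    rw [← rpow_rpow_inv (hG₁ x hx).le hα.ne', hGα, mul_rpow (by positivity) hx.le,
      rpow_rpow_inv hG₁1.le hα.ne', one_div]
  refine ⟨G₁ 1, hG₁1, 1, one_pos, G₂ 1 / G₁ 1, div_pos (hG₂ 1 one_pos) hG₁1,
    fun x hx => ⟨by rw [hG₁x x hx, mul_one], ?_⟩, fun b hb => ?_⟩
  · rcases hx.eq_or_lt' with rfl | hx
    · rw [hG₂0, zero_rpow (one_div_ne_zero hα.ne'), mul_zero]
    rw [← div_mul_cancel₀ (G₂ x) (hG₁ x hx).ne', hr x hx, hG₁x x hx.le]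
    ring
  · simpa using H.normalized one_pos hG₁1 hb

lemma snd_mul_sub_snd (H : GeneratingEquation J₁ J₂ G₁ G₂ η α) {u v : ℝ} (hu : 0 < u)
    (hv : 0 < v) (hG₁u : 0 < G₁ u) (hG₁v : 0 < G₁ v) (hrv : 0 < G₂ v / G₁ v) {t : ℝ}
    (ht : 0 ≤ t) :
    J₂ ((G₂ u / G₁ u) / (G₂ v / G₁ v) * t) - J₂ t =
      (η * u / G₁ u ^ α - η * v / G₁ v ^ α) / (G₂ v / G₁ v) ^ α * t ^ α := by
  have hs : 0 ≤ t / (G₂ v / G₁ v) := div_nonneg ht hrv.le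
  have Hu := H.normalized hu hG₁u hs
  have Hv := H.normalized hv hG₁v hs
  rw [mul_div_assoc', mul_div_right_comm] at Hu
  rw [mul_div_cancel₀ t hrv.ne'] at Hv
  rw [div_rpow ht hrv.le] at Hu Hv
  linear_combination Hu - Hv

lemma exists_snd_eq_mul_rpow_of_ratio_ne (H : GeneratingEquation J₁ J₂ G₁ G₂ η α)
    (hα : 0 < α) {β : ℝ} (hβ : 0 < β)
    (hreg : ∀ b > (0 : ℝ), Tendsto (fun x => J₂ (b * x) / J₂ x) (𝓝[>] 0) (𝓝 (b ^ β)))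
    (hG₁ : ∀ x > 0, 0 < G₁ x) (hG₂ : ∀ x > 0, 0 < G₂ x) {u v : ℝ} (hu : 0 < u) (hv : 0 < v)
    (hr : G₂ u / G₁ u ≠ G₂ v / G₁ v) : ∃ c, ∀ t > 0, J₂ t = c * t ^ α := by
  wlog hlt : G₂ v / G₁ v < G₂ u / G₁ u generalizing u v
  · exact this hv hu hr.symm (hr.lt_or_gt.resolve_right hlt)
  have hrv : 0 < G₂ v / G₁ v := div_pos (hG₂ v hv) (hG₁ v hv)
  have hL : 1 < (G₂ u / G₁ u) / (G₂ v / G₁ v) := (one_lt_div hrv).2 hlt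
  exact ⟨_, fun t ht => eq_div_mul_rpow_of_sub_eq hα hL (one_lt_rpow hL hβ).ne'
    (hreg _ (by linarith)) (fun s hs => H.snd_mul_sub_snd hu hv (hG₁ u hu) (hG₁ v hv) hrv hs.le) ht⟩

lemma J_eq_mul_rpow_of_ratio_ne (H : GeneratingEquation J₁ J₂ G₁ G₂ η α) (hα : 0 < α) {β : ℝ}
    (hβ : 0 < β)
    (hreg : ∀ b > (0 : ℝ), Tendsto (fun x => J₂ (b * x) / J₂ x) (𝓝[>] 0) (𝓝 (b ^ β)))
    (hJ₁nn : ∀ b ≥ 0, 0 ≤ J₁ b) (hJ₂nn : ∀ b ≥ 0, 0 ≤ J₂ b) (hJ₂0 : J₂ 0 = 0)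
    (hJ₁ne : ∃ b ≥ 0, J₁ b ≠ 0) (hJ₂ne : ∃ b ≥ 0, J₂ b ≠ 0)
    (hG₁nn : ∀ x ≥ 0, 0 ≤ G₁ x) (hG₂nn : ∀ x ≥ 0, 0 ≤ G₂ x)
    (hG₁ : ∀ x > 0, 0 < G₁ x) (hG₂ : ∀ x > 0, 0 < G₂ x) {z : ℝ} (hz : 0 < z)
    (hr : G₂ z / G₁ z ≠ G₂ 1 / G₁ 1) :
    ∃ c₁ > (0 : ℝ), ∃ c₂ > (0 : ℝ), (∀ b ≥ (0 : ℝ), J₁ b = c₁ * b ^ α ∧ J₂ b = c₂ * b ^ α) ∧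
      (∀ x ≥ (0 : ℝ), c₁ * G₁ x ^ α + c₂ * G₂ x ^ α = η * x) := by
  obtain ⟨c₂, hc₂⟩ := H.exists_snd_eq_mul_rpow_of_ratio_ne hα hβ hreg hG₁ hG₂ hz one_pos hr
  have hJ₂ : ∀ t ≥ 0, J₂ t = c₂ * t ^ α := by
    intro t ht
    rcases ht.eq_or_lt' with rfl | ht
    · rw [hJ₂0, zero_rpow hα.ne', mul_zero]
    exact hc₂ t ht
  have hG₁1 := hG₁ 1 one_pos
  have hr1 : 0 ≤ G₂ 1 / G₁ 1 := (div_pos (hG₂ 1 one_pos) hG₁1).le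
  have hJ₁ : ∀ s ≥ 0, J₁ s = (η / G₁ 1 ^ α - c₂ * (G₂ 1 / G₁ 1) ^ α) * s ^ α := by
    intro s hs
    have H1 := H.normalized one_pos hG₁1 hs
    rw [hJ₂ _ (mul_nonneg hr1 hs), mul_rpow hr1 hs] at H1
    linear_combination H1
  refine ⟨_, pos_of_eq_const_mul_rpow hJ₁ hJ₁nn hJ₁ne, c₂,
    pos_of_eq_const_mul_rpow hJ₂ hJ₂nn hJ₂ne, fun b hb => ⟨hJ₁ b hb, hJ₂ b hb⟩, fun x hx => ?_⟩
  have Hx := H 1 zero_le_one x hx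
  rwa [one_mul, one_mul, one_rpow, mul_one, hJ₁ _ (hG₁nn x hx), hJ₂ _ (hG₂nn x hx)] at Hx

lemma of_G_eq_mul_rpow (hα : α ≠ 0) {c₀ g₁ g₂ : ℝ} (hc₀ : 0 < c₀)
    (hG : ∀ x ≥ (0 : ℝ), G₁ x = c₀ * g₁ * x ^ (1 / α) ∧ G₂ x = c₀ * g₂ * x ^ (1 / α))
    (hJ : ∀ b ≥ (0 : ℝ), J₁ (g₁ * b) + J₂ (g₂ * b) = (η / c₀ ^ α) * b ^ α) :
    GeneratingEquation J₁ J₂ G₁ G₂ η α := by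
  intro b hb x hx
  have hy : 0 ≤ c₀ * x ^ (1 / α) * b := by positivity
  have hyα : (c₀ * x ^ (1 / α) * b) ^ α = c₀ ^ α * x * b ^ α := by
    rw [mul_rpow (by positivity) hb, mul_rpow hc₀.le (by positivity), ← rpow_mul hx,
      one_div_mul_cancel hα, rpow_one]
  obtain ⟨hG₁, hG₂⟩ := hG x hx
  rw [hG₁, hG₂, show b * (c₀ * g₁ * x ^ (1 / α)) = g₁ * (c₀ * x ^ (1 / α) * b) by ring,
    show b * (c₀ * g₂ * x ^ (1 / α)) = g₂ * (c₀ * x ^ (1 / α) * b) by ring, hJ _ hy, hyα]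
  field_simp [(rpow_pos_of_pos hc₀ α).ne']

lemma of_J_eq_mul_rpow {c₁ c₂ : ℝ} (hJ : ∀ b ≥ (0 : ℝ), J₁ b = c₁ * b ^ α ∧ J₂ b = c₂ * b ^ α)
    (hG₁nn : ∀ x ≥ 0, 0 ≤ G₁ x) (hG₂nn : ∀ x ≥ 0, 0 ≤ G₂ x)
    (hG : ∀ x ≥ (0 : ℝ), c₁ * G₁ x ^ α + c₂ * G₂ x ^ α = η * x) :
    GeneratingEquation J₁ J₂ G₁ G₂ η α := by
  intro b hb x hx
  rw [(hJ _ (mul_nonneg hb (hG₁nn x hx))).1, (hJ _ (mul_nonneg hb (hG₂nn x hx))).2,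
    mul_rpow hb (hG₁nn x hx), mul_rpow hb (hG₂nn x hx), ← hG x hx]
  ring

end GeneratingEquation

theorem stmt12_general (α₁ α₂ : ℝ) (hα₂ : 1 < α₂) (hα₁₂ : α₂ ≤ α₁)
    (q₁ q₂ : ℝ) (hq₁ : 0 ≤ q₁) (hq₂ : 0 ≤ q₂)
    (ν₁ ν₂ : Measure ℝ)
    (J₁ J₂ : ℝ → ℝ)
    (hJ₁ : ∀ b ≥ (0:ℝ), J₁ b = (1/2) * q₁ * b ^ 2
        + ∫ v in Set.Ioi (0:ℝ), (Real.exp (-(b * v)) - 1 + b * v) ∂ν₁)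
    (hJ₂ : ∀ b ≥ (0:ℝ), J₂ b = (1/2) * q₂ * b ^ 2
        + ∫ v in Set.Ioi (0:ℝ), (Real.exp (-(b * v)) - 1 + b * v) ∂ν₂)
    (hJ₁ne : ∃ b ≥ (0:ℝ), J₁ b ≠ 0) (hJ₂ne : ∃ b ≥ (0:ℝ), J₂ b ≠ 0)
    (hreg₂ : ∀ b > (0:ℝ), Tendsto (fun x => J₂ (b * x) / J₂ x)
      (nhdsWithin 0 (Set.Ioi 0)) (nhds (b ^ α₂)))
    (G₁ G₂ : ℝ → ℝ)
    (hG₁nn : ∀ x ≥ (0:ℝ), 0 ≤ G₁ x) (hG₂nn : ∀ x ≥ (0:ℝ), 0 ≤ G₂ x)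
    (hG₁pos : ∀ x > (0:ℝ), 0 < G₁ x) (hG₂pos : ∀ x > (0:ℝ), 0 < G₂ x)
    (η₁ : ℝ) (hη₁ : 0 < η₁) :
    (∀ b ≥ (0:ℝ), ∀ x ≥ (0:ℝ),
        J₁ (b * G₁ x) + J₂ (b * G₂ x) = η₁ * x * b ^ α₁) ↔
      ((∃ c₀ > (0:ℝ), ∃ g₁ > (0:ℝ), ∃ g₂ > (0:ℝ),
          (∀ x ≥ (0:ℝ), G₁ x = c₀ * g₁ * x ^ (1 / α₁) ∧ G₂ x = c₀ * g₂ * x ^ (1 / α₁)) ∧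
          (∀ b ≥ (0:ℝ), J₁ (g₁ * b) + J₂ (g₂ * b) = (η₁ / c₀ ^ α₁) * b ^ α₁)) ∨
       (∃ c₁ > (0:ℝ), ∃ c₂ > (0:ℝ),
          (∀ b ≥ (0:ℝ), J₁ b = c₁ * b ^ α₁ ∧ J₂ b = c₂ * b ^ α₁) ∧
          (∀ x ≥ (0:ℝ), c₁ * G₁ x ^ α₁ + c₂ * G₂ x ^ α₁ = η₁ * x))) := by
  have hα₁pos : 0 < α₁ := by linarith
  have hJ₁nn : ∀ b ≥ (0 : ℝ), 0 ≤ J₁ b := fun b hb => hJ₁ b hb ▸ laplaceExponent_nonneg_s12 hq₁ ν₁ b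
  have hJ₂nn : ∀ b ≥ (0 : ℝ), 0 ≤ J₂ b := fun b hb => hJ₂ b hb ▸ laplaceExponent_nonneg_s12 hq₂ ν₂ b
  have hJ₂0 : J₂ 0 = 0 := by simpa using hJ₂ 0 le_rfl
  show GeneratingEquation J₁ J₂ G₁ G₂ η₁ α₁ ↔ _
  refine ⟨fun H => ?_, ?_⟩
  · by_cases hr : ∀ x > (0 : ℝ), G₂ x / G₁ x = G₂ 1 / G₁ 1
    · have hG₁0 := H.fst_zero hJ₁nn hJ₂nn hJ₁ne (hG₁nn 0 le_rfl) (hG₂nn 0 le_rfl)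
      have hG₂0 := H.swap.fst_zero hJ₂nn hJ₁nn hJ₂ne (hG₂nn 0 le_rfl) (hG₁nn 0 le_rfl)
      exact Or.inl (H.G_eq_mul_rpow_of_ratio_const hη₁ hα₁pos hG₁0 hG₂0 hG₁pos hG₂pos hr)
    · push Not at hr
      obtain ⟨z, hz, hrz⟩ := hr
      exact Or.inr (H.J_eq_mul_rpow_of_ratio_ne hα₁pos (by linarith) hreg₂ hJ₁nn hJ₂nn hJ₂0
        hJ₁ne hJ₂ne hG₁nn hG₂nn hG₁pos hG₂pos hz hrz)
  · rintro (⟨c₀, hc₀, g₁, -, g₂, -, hG, hJ⟩ | ⟨c₁, -, c₂, -, hJ, hG⟩)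
    · exact GeneratingEquation.of_G_eq_mul_rpow hα₁pos.ne' hc₀ hG hJ
    · exact GeneratingEquation.of_J_eq_mul_rpow hJ hG₁nn hG₂nn hG

/-- Generating equations on a plane, case `J_μ̃(b) = η₁ b^{α₁}`: under the stated
assumptions on the Laplace exponents `J₁, J₂` (regularly varying at 0 with indices
`α₁ ≥ α₂` in `(1,2]`, infinite variation) and on `G₁, G₂`, the identity
`J₁(bG₁(x)) + J₂(bG₂(x)) = η₁·x·b^{α₁}` holds for all `b, x ≥ 0` iff either
(a) `G = c₀·x^{1/α₁}·(g₁, g₂)` and `g₁Z₁ + g₂Z₂` has `α₁`-stable exponent, or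
(b) `J₁, J₂` are `α₁`-stable exponents and `c₁G₁^{α₁} + c₂G₂^{α₁} = η₁x`. -/
theorem stmt12 (α₁ α₂ : ℝ) (hα₂ : 1 < α₂) (hα₁₂ : α₂ ≤ α₁) (hα₁ : α₁ ≤ 2)
    (q₁ q₂ : ℝ) (hq₁ : 0 ≤ q₁) (hq₂ : 0 ≤ q₂)
    (ν₁ ν₂ : Measure ℝ)
    (hν₁ : ∫⁻ v in Set.Ioi (0:ℝ), ENNReal.ofReal (min (v ^ 2) v) ∂ν₁ < ⊤)
    (hν₂ : ∫⁻ v in Set.Ioi (0:ℝ), ENNReal.ofReal (min (v ^ 2) v) ∂ν₂ < ⊤)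
    (J₁ J₂ : ℝ → ℝ)
    (hJ₁ : ∀ b ≥ (0:ℝ), J₁ b = (1/2) * q₁ * b ^ 2
        + ∫ v in Set.Ioi (0:ℝ), (Real.exp (-(b * v)) - 1 + b * v) ∂ν₁)
    (hJ₂ : ∀ b ≥ (0:ℝ), J₂ b = (1/2) * q₂ * b ^ 2
        + ∫ v in Set.Ioi (0:ℝ), (Real.exp (-(b * v)) - 1 + b * v) ∂ν₂)
    (hJ₁ne : ∃ b ≥ (0:ℝ), J₁ b ≠ 0) (hJ₂ne : ∃ b ≥ (0:ℝ), J₂ b ≠ 0)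
    (hreg₁ : ∀ b > (0:ℝ), Tendsto (fun x => J₁ (b * x) / J₁ x)
      (nhdsWithin 0 (Set.Ioi 0)) (nhds (b ^ α₁)))
    (hreg₂ : ∀ b > (0:ℝ), Tendsto (fun x => J₂ (b * x) / J₂ x)
      (nhdsWithin 0 (Set.Ioi 0)) (nhds (b ^ α₂)))
    (hiv₁ : 0 < q₁ ∨ ∫⁻ v in Set.Ioc (0:ℝ) 1, ENNReal.ofReal v ∂ν₁ = ⊤)
    (hiv₂ : 0 < q₂ ∨ ∫⁻ v in Set.Ioc (0:ℝ) 1, ENNReal.ofReal v ∂ν₂ = ⊤)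
    (G₁ G₂ : ℝ → ℝ)
    (hG₁c : ContinuousOn G₁ (Set.Ici 0)) (hG₂c : ContinuousOn G₂ (Set.Ici 0))
    (hG₁nn : ∀ x ≥ (0:ℝ), 0 ≤ G₁ x) (hG₂nn : ∀ x ≥ (0:ℝ), 0 ≤ G₂ x)
    (hG₁pos : ∀ x > (0:ℝ), 0 < G₁ x) (hG₂pos : ∀ x > (0:ℝ), 0 < G₂ x)
    (hratio : ContDiffOn ℝ 1 (fun x => G₂ x / G₁ x) (Set.Ioi 0))
    (η₁ : ℝ) (hη₁ : 0 < η₁) :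
    (∀ b ≥ (0:ℝ), ∀ x ≥ (0:ℝ),
        J₁ (b * G₁ x) + J₂ (b * G₂ x) = η₁ * x * b ^ α₁) ↔
      ((∃ c₀ > (0:ℝ), ∃ g₁ > (0:ℝ), ∃ g₂ > (0:ℝ),
          (∀ x ≥ (0:ℝ), G₁ x = c₀ * g₁ * x ^ (1 / α₁) ∧ G₂ x = c₀ * g₂ * x ^ (1 / α₁)) ∧
          (∀ b ≥ (0:ℝ), J₁ (g₁ * b) + J₂ (g₂ * b) = (η₁ / c₀ ^ α₁) * b ^ α₁)) ∨
       (∃ c₁ > (0:ℝ), ∃ c₂ > (0:ℝ),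
          (∀ b ≥ (0:ℝ), J₁ b = c₁ * b ^ α₁ ∧ J₂ b = c₂ * b ^ α₁) ∧
          (∀ x ≥ (0:ℝ), c₁ * G₁ x ^ α₁ + c₂ * G₂ x ^ α₁ = η₁ * x))) :=
  stmt12_general α₁ α₂ hα₂ hα₁₂ q₁ q₂ hq₁ hq₂ ν₁ ν₂ J₁ J₂ hJ₁ hJ₂ hJ₁ne hJ₂ne hreg₂ G₁ G₂ hG₁nn
    hG₂nn hG₁pos hG₂pos η₁ hη₁
end
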